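/- arXiv:2602.17920 — 5 statements merged into one kernel-verified Lean document; each statement's English description precedes it below -/
import Mathlib

section
/- Let σ be a signature on G and let ψ be a non-degenerate eigenvector of the signed Laplacian L^σ whose eigenvalue is the n-th smallest eigenvalue of L^σ (counted with multiplicity). Then the number of nodal domains of ψ satisfies ν(ψ) ≤ n. -/
/-!
If `L ψ = λ ψ` and `c` is constant on the nodal domains of `ψ`, then `x = c ψ` satisfies
`2 ⟪x, L x⟫ = 2 λ ‖x‖² - ∑ᵢⱼ L i j ψ i ψ j (c i - c j)²`, and every term of the sum is
nonnegative. These `x` form a space of dimension `ν(ψ)` on which the Rayleigh quotient is at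
most `λ`, so by the min-max principle `ν(ψ)` is at most the number of eigenvalues `≤ λ`, which
is `n` when `λ` is the simple `n`-th eigenvalue.
-/

open Matrix Finset

noncomputable section

variable {V : Type*}

/-- The signed Laplacian of the weighted graph `(G,w)` with signature `σ`. -/
def signedLaplacian [Fintype V] [DecidableEq V] (G : SimpleGraph V) [DecidableRel G.Adj]
    (w σ : V → V → ℝ) : Matrix V V ℝ :=
  Matrix.of fun i j =>
    if i = j then ∑ k, if G.Adj i k then w i k else 0
    else if G.Adj i j then -(σ i j * w i j) else 0

/-- The `n`-th smallest eigenvalue (1-based, counted with multiplicity) of a real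
symmetric matrix; junk value `0` if the matrix is not Hermitian or `n` is out of range. -/
def nthEigenvalue [Fintype V] [DecidableEq V] (A : Matrix V V ℝ) (n : ℕ) : ℝ :=
  if h : A.IsHermitian ∧ n - 1 < Fintype.card V then
    let f : Fin (Fintype.card V) → ℝ := fun i => h.1.eigenvalues ((Fintype.equivFin V).symm i)
    f (Tuple.sort f ⟨n - 1, h.2⟩)
  else 0

/-- `μ` is a simple eigenvalue of `A`: its eigenspace is one-dimensional. -/
def IsSimpleEigenvalue [Fintype V] [DecidableEq V] (A : Matrix V V ℝ) (μ : ℝ) : Prop :=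
  Module.finrank ℝ (Module.End.eigenspace (Matrix.toLin' A) μ) = 1

/-- The nodal set of `u` with respect to the signature `σ`, as a set of (unordered) edges. -/
def nodalEdges (G : SimpleGraph V) (σ : V → V → ℝ) (u : V → ℝ) : Set (Sym2 V) :=
  {e | ∃ i j, e = s(i, j) ∧ G.Adj i j ∧ u i * σ i j * u j < 0}

/-- The number of nodal domains of `u` on `(G,σ)`: the number of connected components
of the spanning subgraph obtained by deleting the nodal set. -/
def nodalCount (G : SimpleGraph V) (σ : V → V → ℝ) (u : V → ℝ) : ℕ :=
  Nat.card (G.deleteEdges (nodalEdges G σ u)).ConnectedComponent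

/-- `(G,σ)` is balanced: every cycle has positive sign. -/
def IsBalanced (G : SimpleGraph V) (σ : V → V → ℝ) : Prop :=
  ∀ ⦃v : V⦄ (p : G.Walk v v), p.IsCycle →
    0 < (p.darts.map fun d => σ d.toProd.1 d.toProd.2).prod

/-- The matrix `B_{ij}(a)`. -/
def Bmat [DecidableEq V] (i j : V) (a : ℝ) : Matrix V V ℝ :=
  Matrix.of fun x y =>
    if x = i ∧ y = i then a
    else if x = j ∧ y = j then a⁻¹
    else if (x = i ∧ y = j) ∨ (x = j ∧ y = i) then -1
    else 0

/-- The signature `σ^{∂P}` determined by the partition `P`. -/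
def partSgn {ν : ℕ} (P : V → Fin ν) (i j : V) : ℝ :=
  if P i = P j then 1 else -1

/-- `L^{∂P}(P,α)`: the partition Laplacian perturbed by the rank-one parameter matrices
on the oriented boundary edges `O`. -/
def paramMatrix [Fintype V] [DecidableEq V] (G : SimpleGraph V) [DecidableRel G.Adj]
    (w : V → V → ℝ) {ν : ℕ} (P : V → Fin ν) (O : Finset (V × V)) (α : V × V → ℝ) :
    Matrix V V ℝ :=
  signedLaplacian G w (partSgn P) + ∑ p ∈ O, w p.1 p.2 • Bmat p.1 p.2 (α p)

/-- The principal submatrix of `M` on the `k`-th part of the partition `P`. -/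
def blockMatrix {ν : ℕ} (M : Matrix V V ℝ) (P : V → Fin ν) (k : Fin ν) :
    Matrix {v : V // P v = k} {v : V // P v = k} ℝ :=
  M.submatrix Subtype.val Subtype.val

/-- `λ₁(G_k, α)`: the smallest eigenvalue of the block of `L^{∂P}(P,α)` on part `k`. -/
def lam1Block [Fintype V] [DecidableEq V] {ν : ℕ} (M : Matrix V V ℝ) (P : V → Fin ν)
    (k : Fin ν) : ℝ :=
  nthEigenvalue (blockMatrix M P k) 1

/-- The partition energy `Λ(P, α) = max_k λ₁(G_k, α)`. -/
def PartitionEnergy [Fintype V] [DecidableEq V] (G : SimpleGraph V) [DecidableRel G.Adj]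
    (w : V → V → ℝ) {ν : ℕ} (P : V → Fin ν) (O : Finset (V × V)) (α : V × V → ℝ) : ℝ :=
  ⨆ k : Fin ν, lam1Block (paramMatrix G w P O α) P k

/-- `(P, α)` is an equipartition: all the first block eigenvalues agree. -/
def IsEquipartition [Fintype V] [DecidableEq V] (G : SimpleGraph V) [DecidableRel G.Adj]
    (w : V → V → ℝ) {ν : ℕ} (P : V → Fin ν) (O : Finset (V × V)) (α : V × V → ℝ) : Prop :=
  ∀ k l : Fin ν, lam1Block (paramMatrix G w P O α) P k = lam1Block (paramMatrix G w P O α) P l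

section Rayleigh

variable {E ι W : Type*} [NormedAddCommGroup E] [InnerProductSpace ℝ E] [Fintype ι]
  [AddCommGroup W] [Module ℝ W] {T : E →ₗ[ℝ] E} {b : OrthonormalBasis ι ℝ E} {μ : ι → ℝ}

theorem LinearMap.IsSymmetric.inner_map_self_eq_sum (hT : T.IsSymmetric)
    (hb : ∀ i, T (b i) = μ i • b i) (x : E) :
    inner ℝ (T x) x = ∑ i, μ i * inner ℝ (b i) x ^ 2 := by
  rw [← b.sum_inner_mul_inner (T x) x]
  refine sum_congr rfl fun i _ => ?_
  rw [hT, hb, real_inner_smul_right, real_inner_comm]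
  ring

theorem LinearMap.IsSymmetric.eq_zero_of_inner_map_self_le (hT : T.IsSymmetric)
    (hb : ∀ i, T (b i) = μ i • b i) {lam : ℝ} {x : E}
    (hx : inner ℝ (T x) x ≤ lam * ‖x‖ ^ 2) (hlow : ∀ i, μ i ≤ lam → inner ℝ (b i) x = 0) :
    x = 0 := by
  have hnorm : ‖x‖ ^ 2 = ∑ i, inner ℝ (b i) x ^ 2 := by
    rw [← real_inner_self_eq_norm_sq, ← b.sum_inner_mul_inner x x]
    exact sum_congr rfl fun i _ => by rw [real_inner_comm, sq]
  have hterm : ∀ i, 0 ≤ (μ i - lam) * inner ℝ (b i) x ^ 2 := fun i => by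
    by_cases h : μ i ≤ lam
    · simp [hlow i h]
    · exact mul_nonneg (by linarith) (sq_nonneg _)
  have hsum : ∑ i, (μ i - lam) * inner ℝ (b i) x ^ 2 = 0 := by
    refine le_antisymm ?_ (sum_nonneg fun i _ => hterm i)
    simp only [sub_mul, sum_sub_distrib, ← mul_sum, ← hnorm, ← hT.inner_map_self_eq_sum hb]
    linarith
  have hcoord : ∀ i, inner ℝ (b i) x = 0 := fun i => by
    by_cases h : μ i ≤ lam
    · exact hlow i h
    · have := (sum_eq_zero_iff_of_nonneg fun i _ => hterm i).mp hsum i (mem_univ i)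
      exact pow_eq_zero_iff two_ne_zero |>.mp <|
        (mul_eq_zero.mp this).resolve_left (by linarith)
  rw [← b.sum_repr' x]
  simp [hcoord]

theorem LinearMap.IsSymmetric.finrank_le_card_of_inner_map_self_le (hT : T.IsSymmetric)
    (hb : ∀ i, T (b i) = μ i • b i) {lam : ℝ} (f : W →ₗ[ℝ] E) (hf : Function.Injective f)
    (hW : ∀ w, inner ℝ (T (f w)) (f w) ≤ lam * ‖f w‖ ^ 2) :
    Module.finrank ℝ W ≤ #{i | μ i ≤ lam} := by
  let coords : W →ₗ[ℝ] {i // μ i ≤ lam} → ℝ :=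
    LinearMap.pi fun i => (innerSL ℝ (b i)).toLinearMap ∘ₗ f
  have hcoords : Function.Injective coords := by
    rw [← LinearMap.ker_eq_bot, LinearMap.ker_eq_bot']
    intro w hw
    apply hf
    rw [map_zero]
    refine hT.eq_zero_of_inner_map_self_le hb (hW w) fun i hi => ?_
    simpa [coords] using congrFun hw ⟨i, hi⟩
  simpa [Fintype.card_subtype] using LinearMap.finrank_le_finrank_of_injective hcoords

end Rayleigh

theorem Tuple.card_filter_le_sort_le {m : ℕ} {α : Type*} [LinearOrder α] (f : Fin m → α)
    (q : Fin m) (huniq : ∀ j, f j = f (Tuple.sort f q) → j = Tuple.sort f q) :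
    #{j | f j ≤ f (Tuple.sort f q)} ≤ q + 1 := by
  calc #{j | f j ≤ f (Tuple.sort f q)}
      ≤ #(Iic q) := by
        refine card_le_card_of_injOn (Tuple.sort f).symm (fun j hj => ?_)
          (Tuple.sort f).symm.injective.injOn
        simp only [coe_filter, mem_univ, true_and, Set.mem_ofPred_eq] at hj
        simp only [coe_Iic, Set.mem_Iic]
        by_contra! hlt
        have hge := Tuple.monotone_sort f hlt.le
        simp only [Function.comp_apply, Equiv.apply_symm_apply] at hge
        have := huniq j (le_antisymm hj hge)
        simp [this] at hlt
    _ = q + 1 := by simp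

theorem Matrix.IsSymm.dotProduct_mulVec_mul_eigenvector {ι : Type*} [Fintype ι]
    {A : Matrix ι ι ℝ} (hA : A.IsSymm) {ψ : ι → ℝ} {lam : ℝ} (heig : A *ᵥ ψ = lam • ψ)
    (g : ι → ℝ) :
    2 * ((g * ψ) ⬝ᵥ A *ᵥ (g * ψ)) =
      2 * lam * ((g * ψ) ⬝ᵥ (g * ψ)) - ∑ i, ∑ j, A i j * ψ i * ψ j * (g i - g j) ^ 2 := by
  have hrow : ∀ i, ∑ j, A i j * ψ j = lam * ψ i := fun i => by
    simpa [mulVec, dotProduct] using congrFun heig i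
  have hleft : lam * ((g * ψ) ⬝ᵥ (g * ψ)) = ∑ i, ∑ j, A i j * ψ i * ψ j * g i ^ 2 := by
    simp only [dotProduct, Pi.mul_apply, mul_sum]
    refine sum_congr rfl fun i _ => ?_
    rw [show lam * (g i * ψ i * (g i * ψ i)) = g i ^ 2 * ψ i * (lam * ψ i) by ring, ← hrow i,
      mul_sum]
    exact sum_congr rfl fun j _ => by ring
  have hright : lam * ((g * ψ) ⬝ᵥ (g * ψ)) = ∑ i, ∑ j, A i j * ψ i * ψ j * g j ^ 2 := by
    rw [hleft, sum_comm]
    exact sum_congr rfl fun i _ => sum_congr rfl fun j _ => by rw [hA.apply i j]; ring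
  have hquad : (g * ψ) ⬝ᵥ A *ᵥ (g * ψ) = ∑ i, ∑ j, A i j * ψ i * ψ j * (g i * g j) := by
    simp only [dotProduct, mulVec, Pi.mul_apply, mul_sum]
    exact sum_congr rfl fun i _ => sum_congr rfl fun j _ => by ring
  have hexpand : ∑ i, ∑ j, A i j * ψ i * ψ j * (g i - g j) ^ 2 =
      ∑ i, ∑ j, A i j * ψ i * ψ j * g i ^ 2 + ∑ i, ∑ j, A i j * ψ i * ψ j * g j ^ 2 -
        2 * ∑ i, ∑ j, A i j * ψ i * ψ j * (g i * g j) := by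
    simp only [mul_sum, ← sum_add_distrib, ← sum_sub_distrib]
    exact sum_congr rfl fun i _ => sum_congr rfl fun j _ => by ring
  linarith

namespace Matrix.IsHermitian

variable {W n : Type*} [AddCommGroup W] [Module ℝ W] [Fintype n] [DecidableEq n]
  {A : Matrix n n ℝ}

theorem toEuclideanLin_eigenvectorBasis (hA : A.IsHermitian) (i : n) :
    A.toEuclideanLin (hA.eigenvectorBasis i) = hA.eigenvalues i • hA.eigenvectorBasis i :=
  WithLp.ofLp_injective 2 (hA.mulVec_eigenvectorBasis i)

theorem finrank_le_card_eigenvalues_le (hA : A.IsHermitian) {lam : ℝ} (f : W →ₗ[ℝ] n → ℝ)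
    (hf : Function.Injective f) (hW : ∀ w, f w ⬝ᵥ A *ᵥ f w ≤ lam * (f w ⬝ᵥ f w)) :
    Module.finrank ℝ W ≤ #{i | hA.eigenvalues i ≤ lam} := by
  refine (isSymmetric_toEuclideanLin_iff.mpr hA).finrank_le_card_of_inner_map_self_le
    hA.toEuclideanLin_eigenvectorBasis ((WithLp.linearEquiv 2 ℝ (n → ℝ)).symm.toLinearMap ∘ₗ f)
    ((WithLp.linearEquiv 2 ℝ (n → ℝ)).symm.injective.comp hf) fun w => ?_
  rw [← real_inner_self_eq_norm_sq]
  exact hW w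

theorem card_eigenvalues_eq_le_finrank (hA : A.IsHermitian) (lam : ℝ) :
    Fintype.card {i // hA.eigenvalues i = lam} ≤
      Module.finrank ℝ (Module.End.eigenspace (toLin' A) lam) := by
  let v : {i // hA.eigenvalues i = lam} → Module.End.eigenspace (toLin' A) lam := fun i =>
    ⟨hA.eigenvectorBasis i, by
      rw [Module.End.mem_eigenspace_iff, toLin'_apply, hA.mulVec_eigenvectorBasis, i.2]⟩
  have hv : LinearIndependent ℝ v := by
    refine LinearIndependent.of_comp (Module.End.eigenspace (toLin' A) lam).subtype ?_
    exact (hA.eigenvectorBasis.orthonormal.linearIndependent.comp _ Subtype.val_injective).map'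
      (WithLp.linearEquiv 2 ℝ (n → ℝ)).toLinearMap (LinearEquiv.ker _)
  exact hv.fintype_card_le_finrank

theorem eq_of_eigenvalues_eq_of_isSimpleEigenvalue (hA : A.IsHermitian) {lam : ℝ}
    (hsimple : IsSimpleEigenvalue A lam) {i j : n} (hi : hA.eigenvalues i = lam)
    (hj : hA.eigenvalues j = lam) : i = j := by
  have hcard := hA.card_eigenvalues_eq_le_finrank lam
  rw [IsSimpleEigenvalue] at hsimple
  rw [hsimple] at hcard
  exact congrArg Subtype.val (Fintype.card_le_one_iff.mp hcard ⟨i, hi⟩ ⟨j, hj⟩)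

theorem card_eigenvalues_le_nthEigenvalue_le (hA : A.IsHermitian) {k : ℕ} (hk : 1 ≤ k)
    (huniq : ∀ i j, hA.eigenvalues i = nthEigenvalue A k →
      hA.eigenvalues j = nthEigenvalue A k → i = j) :
    #{i | hA.eigenvalues i ≤ nthEigenvalue A k} ≤ k := by
  by_cases hkn : k ≤ Fintype.card n
  · set e := Fintype.equivFin n
    set f : Fin (Fintype.card n) → ℝ := fun i => hA.eigenvalues (e.symm i)
    set q : Fin (Fintype.card n) := ⟨k - 1, by omega⟩
    have hq : nthEigenvalue A k = f (Tuple.sort f q) := by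
      rw [nthEigenvalue, dif_pos ⟨hA, q.2⟩]
    calc #{i | hA.eigenvalues i ≤ nthEigenvalue A k}
        = #{j | f j ≤ f (Tuple.sort f q)} := by
          rw [hq]
          exact card_equiv e (by simp [f])
      _ ≤ q + 1 := Tuple.card_filter_le_sort_le f q fun j hj =>
          e.symm.injective (huniq _ _ (hq ▸ hj) hq.symm)
      _ = k := Nat.sub_add_cancel hk
  · exact (card_filter_le _ _).trans (by rw [card_univ]; omega)

end Matrix.IsHermitian

section SignedLaplacian

variable {G : SimpleGraph V} {σ : V → V → ℝ}

theorem adj_nodal_of_connectedComponentMk_ne (hσsymm : ∀ i j, σ i j = σ j i) {ψ : V → ℝ}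
    {i j : V} (hadj : G.Adj i j)
    (hne : (G.deleteEdges (nodalEdges G σ ψ)).connectedComponentMk i ≠
      (G.deleteEdges (nodalEdges G σ ψ)).connectedComponentMk j) :
    ψ i * σ i j * ψ j < 0 := by
  by_contra hpos
  refine hne (SimpleGraph.ConnectedComponent.sound (SimpleGraph.Adj.reachable ?_))
  refine SimpleGraph.deleteEdges_adj.mpr ⟨hadj, fun ⟨a, b, hab, _, hlt⟩ => hpos ?_⟩
  rcases Sym2.eq_iff.mp hab with ⟨rfl, rfl⟩ | ⟨rfl, rfl⟩
  · exact hlt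
  · rw [hσsymm j i] at hlt
    linarith

variable [Fintype V] [DecidableEq V] [DecidableRel G.Adj] {w : V → V → ℝ}

theorem signedLaplacian_isSymm (hwsymm : ∀ i j, w i j = w j i)
    (hσsymm : ∀ i j, σ i j = σ j i) : (signedLaplacian G w σ).IsSymm := by
  ext i j
  simp only [transpose_apply, signedLaplacian, of_apply]
  by_cases h : i = j
  · rw [h]
  · simp only [if_neg (Ne.symm h), if_neg h, G.adj_comm j i, hwsymm j i, hσsymm j i]

theorem signedLaplacian_isHermitian (hwsymm : ∀ i j, w i j = w j i)
    (hσsymm : ∀ i j, σ i j = σ j i) : (signedLaplacian G w σ).IsHermitian :=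
  isHermitian_iff_isSymm.mpr (signedLaplacian_isSymm hwsymm hσsymm)

/-- Across a nodal edge `L i j * ψ i * ψ j = -σ i j * w i j * ψ i * ψ j > 0`; inside a nodal
domain the square vanishes. -/
theorem signedLaplacian_mul_sq_sub_nonneg (hwpos : ∀ i j, G.Adj i j → 0 < w i j)
    (hσsymm : ∀ i j, σ i j = σ j i) (ψ : V → ℝ)
    (c : (G.deleteEdges (nodalEdges G σ ψ)).ConnectedComponent → ℝ) (i j : V) :
    0 ≤ signedLaplacian G w σ i j * ψ i * ψ j *
      (c ((G.deleteEdges (nodalEdges G σ ψ)).connectedComponentMk i) -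
        c ((G.deleteEdges (nodalEdges G σ ψ)).connectedComponentMk j)) ^ 2 := by
  by_cases hij : (G.deleteEdges (nodalEdges G σ ψ)).connectedComponentMk i =
    (G.deleteEdges (nodalEdges G σ ψ)).connectedComponentMk j
  · simp [hij]
  have hne : i ≠ j := fun h => hij (h ▸ rfl)
  refine mul_nonneg ?_ (sq_nonneg _)
  by_cases hadj : G.Adj i j
  · have hnodal := adj_nodal_of_connectedComponentMk_ne hσsymm hadj hij
    have hw := hwpos i j hadj
    simp only [signedLaplacian, of_apply, if_neg hne, if_pos hadj]
    nlinarith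
  · simp [signedLaplacian, hne, hadj]

theorem nodalCount_le_card_eigenvalues_le (hwsymm : ∀ i j, w i j = w j i)
    (hwpos : ∀ i j, G.Adj i j → 0 < w i j) (hσsymm : ∀ i j, σ i j = σ j i) {ψ : V → ℝ}
    {lam : ℝ} (heig : signedLaplacian G w σ *ᵥ ψ = lam • ψ) (hψ : ∀ v, ψ v ≠ 0) :
    nodalCount G σ ψ ≤
      #{i | (signedLaplacian_isHermitian (G := G) hwsymm hσsymm).eigenvalues i ≤ lam} := by
  classical
  set H := G.deleteEdges (nodalEdges G σ ψ)
  let f : (H.ConnectedComponent → ℝ) →ₗ[ℝ] V → ℝ :=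
    LinearMap.pi fun v => ψ v • LinearMap.proj (H.connectedComponentMk v)
  have hf : Function.Injective f := by
    rw [← LinearMap.ker_eq_bot, LinearMap.ker_eq_bot']
    intro c hc
    funext C
    refine C.ind fun v => ?_
    simpa [f, hψ v] using congrFun hc v
  have hW : ∀ c, f c ⬝ᵥ signedLaplacian G w σ *ᵥ f c ≤ lam * (f c ⬝ᵥ f c) := fun c => by
    have hfc : f c = (c ∘ H.connectedComponentMk) * ψ := by
      ext v
      simp [f, mul_comm]
    have hidentity := (signedLaplacian_isSymm hwsymm hσsymm).dotProduct_mulVec_mul_eigenvector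
      heig (c ∘ H.connectedComponentMk)
    have hterms := sum_nonneg fun i (_ : i ∈ univ) => sum_nonneg fun j (_ : j ∈ univ) =>
      signedLaplacian_mul_sq_sub_nonneg hwpos hσsymm ψ c i j
    rw [hfc]
    simp only [Function.comp_apply] at hidentity
    linarith
  have hdim := (signedLaplacian_isHermitian (G := G) hwsymm hσsymm).finrank_le_card_eigenvalues_le
    f hf hW
  rwa [Module.finrank_fintype_fun_eq_card, ← Nat.card_eq_fintype_card] at hdim

end SignedLaplacian

theorem stmt4_general [Fintype V] [DecidableEq V] (G : SimpleGraph V) [DecidableRel G.Adj]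
    (w : V → V → ℝ)
    (hwsymm : ∀ i j, w i j = w j i) (hwpos : ∀ i j, G.Adj i j → 0 < w i j)
    (σ : V → V → ℝ) (hσsymm : ∀ i j, σ i j = σ j i)
    (ψ : V → ℝ) (lam : ℝ) (n : ℕ) (hn1 : 1 ≤ n)
    (heig : (signedLaplacian G w σ).mulVec ψ = lam • ψ)
    (hψnz : ∀ v, ψ v ≠ 0)
    (hsimple : IsSimpleEigenvalue (signedLaplacian G w σ) lam)
    (hlam : lam = nthEigenvalue (signedLaplacian G w σ) n) :
    nodalCount G σ ψ ≤ n := by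
  have hA := signedLaplacian_isHermitian (G := G) hwsymm hσsymm
  subst hlam
  calc nodalCount G σ ψ ≤ #{i | hA.eigenvalues i ≤ nthEigenvalue (signedLaplacian G w σ) n} :=
        nodalCount_le_card_eigenvalues_le hwsymm hwpos hσsymm heig hψnz
    _ ≤ n := hA.card_eigenvalues_le_nthEigenvalue_le hn1 fun _ _ hi hj =>
        hA.eq_of_eigenvalues_eq_of_isSimpleEigenvalue hsimple hi hj

/-- discrete nodal domain theorem for signed Laplacians. If `ψ` is a
non-degenerate eigenvector of `L^σ` whose eigenvalue is the `n`-th smallest eigenvalue of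
`L^σ` (with multiplicity), then the number of nodal domains of `ψ` is at most `n`. -/
theorem stmt4 [Fintype V] [DecidableEq V] (G : SimpleGraph V) [DecidableRel G.Adj]
    (hGconn : G.Connected) (w : V → V → ℝ)
    (hwsymm : ∀ i j, w i j = w j i) (hwpos : ∀ i j, G.Adj i j → 0 < w i j)
    (hw0 : ∀ i j, ¬ G.Adj i j → w i j = 0)
    (σ : V → V → ℝ) (hσsymm : ∀ i j, σ i j = σ j i)
    (hσval : ∀ i j, G.Adj i j → σ i j = 1 ∨ σ i j = -1)
    (ψ : V → ℝ) (lam : ℝ) (n : ℕ) (hn1 : 1 ≤ n) (hn2 : n ≤ Fintype.card V)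
    (heig : (signedLaplacian G w σ).mulVec ψ = lam • ψ)
    (hψnz : ∀ v, ψ v ≠ 0)
    (hsimple : IsSimpleEigenvalue (signedLaplacian G w σ) lam)
    (hlam : lam = nthEigenvalue (signedLaplacian G w σ) n) :
    nodalCount G σ ψ ≤ n :=
  stmt4_general G w hwsymm hwpos σ hσsymm ψ lam n hn1 heig hψnz hsimple hlam

end
end

section
/- Let P be a partition of G with boundary ∂P, fix an oriented edge (i,j) ∈ ∂P, and let ψ be a non-degenerate eigenvector of L^{∂P} whose eigenvalue λ is the n-th smallest eigenvalue of L^{∂P} (counted with multiplicity). Set α₀ = ψ_j/ψ_i. Then ψ is an eigenvector of the matrix L^{∂P} + w_ij B_ij(α₀) with the same eigenvalue λ, and there is an index m with |n − m| ≤ 1 such that λ is the m-th smallest eigenvalue of L^{∂P} + w_ij B_ij(α₀) (counted with multiplicity). -/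
/-!
Since `α₀ ψ_i = ψ_j`, the matrix `B_ij(α₀) = α₀⁻¹ u uᵀ` with `u = α₀ e_i - e_j` kills `ψ`, so
`ψ` stays an eigenvector. The quadratic forms of `L^{∂P}` and of the perturbed matrix agree on
the hyperplane `u^⊥`, so by the min-max principle their eigenvalue counting functions
`N(t) = #{eigenvalues ≤ t}` and `N'(t)` differ by at most one. Simplicity of `λ` gives
`N(λ) = n`, and `λ`, being an eigenvalue of the perturbed matrix, is its `N'(λ)`-th eigenvalue.
-/

open Matrix Finset

noncomputable section

variable {V : Type*}

theorem Tuple.card_filter_comp_sort {α : Type*} [LinearOrder α] [Fintype V] {N : ℕ}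
    (e : V ≃ Fin N) (g : V → α) (p : α → Prop) [DecidablePred p] :
    #{k | p (((g ∘ e.symm) ∘ Tuple.sort (g ∘ e.symm)) k)} = #{v | p (g v)} :=
  card_equiv ((Tuple.sort (g ∘ e.symm)).trans e.symm) (by simp)

theorem card_filter_le_eq_card_filter_lt_add_card_filter_eq {α : Type*} [LinearOrder α]
    [Fintype V] (f : V → α) (a : α) :
    #{v | f v ≤ a} = #{v | f v < a} + #{v | f v = a} := by
  classical
  rw [← card_union_of_disjoint (disjoint_filter.2 fun _ _ h => h.ne), ← filter_or]
  simp only [le_iff_lt_or_eq]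

namespace Matrix.IsHermitian

variable [Fintype V] [DecidableEq V] {A : Matrix V V ℝ}

theorem nthEigenvalue_eq (hA : A.IsHermitian) {m : ℕ} (hm : m - 1 < Fintype.card V) :
    nthEigenvalue A m = ((hA.eigenvalues ∘ (Fintype.equivFin V).symm) ∘
      Tuple.sort (hA.eigenvalues ∘ (Fintype.equivFin V).symm)) ⟨m - 1, hm⟩ := by
  rw [nthEigenvalue, dif_pos ⟨hA, hm⟩]
  rfl

theorem nthEigenvalue_le_iff (hA : A.IsHermitian) {m : ℕ} (hm₀ : 1 ≤ m)
    (hm : m ≤ Fintype.card V) (t : ℝ) :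
    nthEigenvalue A m ≤ t ↔ m ≤ #{v | hA.eigenvalues v ≤ t} := by
  rw [hA.nthEigenvalue_eq (by omega), ← Tuple.card_filter_comp_sort (Fintype.equivFin V) _ (· ≤ t),
    ← Tuple.lt_card_le_iff_apply_le_of_monotone (Tuple.monotone_sort _), Fin.val_mk]
  omega

theorem nthEigenvalue_lt_iff (hA : A.IsHermitian) {m : ℕ} (hm₀ : 1 ≤ m)
    (hm : m ≤ Fintype.card V) (t : ℝ) :
    nthEigenvalue A m < t ↔ m ≤ #{v | hA.eigenvalues v < t} := by
  rw [hA.nthEigenvalue_eq (by omega), ← Tuple.card_filter_comp_sort (Fintype.equivFin V) _ (· < t),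
    ← Tuple.lt_card_lt_iff_apply_lt_of_monotone (Tuple.monotone_sort _), Fin.val_mk]
  omega

theorem dotProduct_mulVec_eq_sum (hA : A.IsHermitian) (x : V → ℝ) :
    x ⬝ᵥ (A *ᵥ x) = ∑ v, hA.eigenvalues v *
      (star (hA.eigenvectorUnitary : Matrix V V ℝ) *ᵥ x) v ^ 2 := by
  set U := (hA.eigenvectorUnitary : Matrix V V ℝ)
  have hA' : A = U * diagonal hA.eigenvalues * star U := by
    simpa [RCLike.ofReal_real_eq_id] using hA.spectral_theorem
  conv_lhs => rw [hA', ← mulVec_mulVec, ← mulVec_mulVec, dotProduct_mulVec, ← mulVec_transpose,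
    ← conjTranspose_eq_transpose_of_trivial, ← star_eq_conjTranspose]
  simp only [dotProduct, mulVec_diagonal, sq, mul_left_comm]

theorem dotProduct_self_eq_sum (hA : A.IsHermitian) (x : V → ℝ) :
    x ⬝ᵥ x = ∑ v, (star (hA.eigenvectorUnitary : Matrix V V ℝ) *ᵥ x) v ^ 2 := by
  set U := (hA.eigenvectorUnitary : Matrix V V ℝ)
  calc x ⬝ᵥ x = x ⬝ᵥ (U *ᵥ (star U *ᵥ x)) := by
        rw [mulVec_mulVec, Unitary.mul_star_self_of_mem hA.eigenvectorUnitary.2, one_mulVec]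
    _ = _ := by
        rw [dotProduct_mulVec, ← mulVec_transpose, ← conjTranspose_eq_transpose_of_trivial,
          ← star_eq_conjTranspose]
        simp only [dotProduct, sq]

theorem finrank_le_card_eigenvalues_le_s5 (hA : A.IsHermitian) {t : ℝ} (W : Submodule ℝ (V → ℝ))
    (hW : ∀ x ∈ W, x ⬝ᵥ (A *ᵥ x) ≤ t * (x ⬝ᵥ x)) :
    Module.finrank ℝ W ≤ #{v | hA.eigenvalues v ≤ t} := by
  set U := (hA.eigenvectorUnitary : Matrix V V ℝ)
  let L : W →ₗ[ℝ] ({v // hA.eigenvalues v ≤ t} → ℝ) :=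
    LinearMap.funLeft ℝ ℝ Subtype.val ∘ₗ toLin' (star U) ∘ₗ W.subtype
  -- a nonzero vector whose eigen-coordinates vanish wherever `λ_v ≤ t` has Rayleigh quotient `> t`
  have hL : Function.Injective L := by
    rw [← LinearMap.ker_eq_bot, LinearMap.ker_eq_bot']
    rintro ⟨x, hx⟩ hLx
    set y := star U *ᵥ x with hy_def
    have hy : ∀ v, hA.eigenvalues v ≤ t → y v = 0 := fun v hv => congr_fun hLx ⟨v, hv⟩
    have hsum : ∑ v, (hA.eigenvalues v - t) * y v ^ 2 ≤ 0 := by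
      have := hW x hx
      rw [hA.dotProduct_mulVec_eq_sum, hA.dotProduct_self_eq_sum, mul_sum] at this
      simpa only [sub_mul, sum_sub_distrib, sub_nonpos] using this
    have hy0 : y = 0 := by
      by_contra hy0
      obtain ⟨v, hv⟩ := Function.ne_iff.mp hy0
      refine hsum.not_gt (sum_pos' (fun u _ => ?_) ⟨v, mem_univ v, ?_⟩)
      · by_cases hu : hA.eigenvalues u ≤ t
        · simp [hy u hu]
        · exact mul_nonneg (by linarith) (sq_nonneg _)
      · have : t < hA.eigenvalues v := lt_of_not_ge fun h => hv (hy v h)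
        exact mul_pos (by linarith) (sq_pos_of_ne_zero hv)
    have : x = U *ᵥ y := by
      rw [hy_def, mulVec_mulVec, Unitary.mul_star_self_of_mem hA.eigenvectorUnitary.2, one_mulVec]
    simp [this, hy0]
  calc Module.finrank ℝ W ≤ Module.finrank ℝ ({v // hA.eigenvalues v ≤ t} → ℝ) :=
        LinearMap.finrank_le_finrank_of_injective hL
    _ = #{v | hA.eigenvalues v ≤ t} := by
        rw [Module.finrank_fintype_fun_eq_card, Fintype.card_subtype]

theorem exists_finrank_eq_card_eigenvalues_le (hA : A.IsHermitian) (t : ℝ) :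
    ∃ W : Submodule ℝ (V → ℝ), Module.finrank ℝ W = #{v | hA.eigenvalues v ≤ t} ∧
      ∀ x ∈ W, x ⬝ᵥ (A *ᵥ x) ≤ t * (x ⬝ᵥ x) := by
  set U := (hA.eigenvectorUnitary : Matrix V V ℝ)
  have hU : star U * U = 1 := Unitary.star_mul_self_of_mem hA.eigenvectorUnitary.2
  let L : ({v // hA.eigenvalues v ≤ t} → ℝ) →ₗ[ℝ] V → ℝ :=
    toLin' U ∘ₗ Function.ExtendByZero.linearMap ℝ Subtype.val
  have hL : Function.Injective L := by
    have hext : Function.Injective (Function.ExtendByZero.linearMap ℝ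
        (Subtype.val : {v // hA.eigenvalues v ≤ t} → V)) :=
      Function.extend_injective Subtype.val_injective (0 : V → ℝ)
    have hUinj : Function.Injective (toLin' U) := fun a b h => by
      simpa [mulVec_mulVec, hU] using congr_arg (star U *ᵥ ·) h
    exact hUinj.comp hext
  refine ⟨LinearMap.range L, ?_, ?_⟩
  · rw [LinearMap.finrank_range_of_inj hL, Module.finrank_fintype_fun_eq_card,
      Fintype.card_subtype]
  · rintro _ ⟨z, rfl⟩
    have hcoord : star U *ᵥ L z = Function.extend Subtype.val z 0 := by
      simp only [L, LinearMap.comp_apply, toLin'_apply, mulVec_mulVec, hU, one_mulVec]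
      rfl
    rw [hA.dotProduct_mulVec_eq_sum, hA.dotProduct_self_eq_sum, hcoord, mul_sum]
    refine sum_le_sum fun v _ => ?_
    by_cases hv : hA.eigenvalues v ≤ t
    · exact mul_le_mul_of_nonneg_right hv (sq_nonneg _)
    · rw [Function.extend_apply' _ _ _ fun ⟨u, hu⟩ => hv (hu ▸ u.2)]
      simp

theorem card_eigenvalues_le_le_add_one {B : Matrix V V ℝ} (hA : A.IsHermitian)
    (hB : B.IsHermitian) (φ : (V → ℝ) →ₗ[ℝ] ℝ)
    (hφ : ∀ x ∈ LinearMap.ker φ, x ⬝ᵥ (B *ᵥ x) = x ⬝ᵥ (A *ᵥ x)) (t : ℝ) :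
    #{v | hA.eigenvalues v ≤ t} ≤ #{v | hB.eigenvalues v ≤ t} + 1 := by
  obtain ⟨W, hWrank, hW⟩ := hA.exists_finrank_eq_card_eigenvalues_le t
  have hWker : Module.finrank ℝ ↥(W ⊓ LinearMap.ker φ) ≤ #{v | hB.eigenvalues v ≤ t} :=
    hB.finrank_le_card_eigenvalues_le_s5 _ fun x hx => (hφ x hx.2).symm ▸ hW x hx.1
  have hdim := Submodule.finrank_sup_add_finrank_inf_eq W (LinearMap.ker φ)
  have hsup : Module.finrank ℝ ↥(W ⊔ LinearMap.ker φ) ≤ Fintype.card V := by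
    simpa using Submodule.finrank_le (W ⊔ LinearMap.ker φ)
  have hker := LinearMap.finrank_range_add_finrank_ker φ
  have hrange : Module.finrank ℝ (LinearMap.range φ) ≤ 1 := by
    simpa using Submodule.finrank_le (LinearMap.range φ)
  simp only [Module.finrank_fintype_fun_eq_card] at hker
  omega

theorem card_eigenvalues_eq_le_finrank_eigenspace (hA : A.IsHermitian) (μ : ℝ) :
    #{v | hA.eigenvalues v = μ} ≤ Module.finrank ℝ (Module.End.eigenspace (toLin' A) μ) := by
  have hli : LinearIndependent ℝ fun v => (hA.eigenvectorBasis v : V → ℝ) :=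
    hA.eigenvectorBasis.orthonormal.linearIndependent.map'
      (WithLp.linearEquiv 2 ℝ (V → ℝ)).toLinearMap (LinearEquiv.ker _)
  let f : {v // hA.eigenvalues v = μ} → Module.End.eigenspace (toLin' A) μ := fun v =>
    ⟨hA.eigenvectorBasis v, by
      rw [Module.End.mem_eigenspace_iff, toLin'_apply, mulVec_eigenvectorBasis, v.2]⟩
  have hf : LinearIndependent ℝ f :=
    LinearIndependent.of_comp (Submodule.subtype _) (hli.comp _ Subtype.val_injective)
  simpa [Fintype.card_subtype] using hf.fintype_card_le_finrank

theorem exists_eigenvalues_eq (hA : A.IsHermitian) {μ : ℝ} {x : V → ℝ} (hx : x ≠ 0)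
    (hAx : A *ᵥ x = μ • x) : ∃ v, hA.eigenvalues v = μ := by
  have : Module.End.HasEigenvalue (toLin' A) μ :=
    Module.End.hasEigenvalue_of_hasEigenvector
      ⟨Module.End.mem_eigenspace_iff.2 (by rwa [toLin'_apply]), hx⟩
  simpa [spectrum_toLin', hA.spectrum_real_eq_range_eigenvalues] using this.mem_spectrum

theorem nthEigenvalue_card_eigenvalues_le (hA : A.IsHermitian) {μ : ℝ}
    (hμ : ∃ v, hA.eigenvalues v = μ) : nthEigenvalue A #{v | hA.eigenvalues v ≤ μ} = μ := by
  obtain ⟨v, hv⟩ := hμ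
  have hsplit := card_filter_le_eq_card_filter_lt_add_card_filter_eq hA.eigenvalues μ
  have hpos : 0 < #{v | hA.eigenvalues v = μ} := card_pos.2 ⟨v, by simp [hv]⟩
  have hm : #{v | hA.eigenvalues v ≤ μ} ≤ Fintype.card V := card_le_univ _
  refine le_antisymm ((hA.nthEigenvalue_le_iff (by omega) hm μ).2 le_rfl) (not_lt.1 fun hlt => ?_)
  have := (hA.nthEigenvalue_lt_iff (by omega) hm μ).1 hlt
  omega

theorem card_eigenvalues_le_nthEigenvalue (hA : A.IsHermitian) {n : ℕ} (hn₀ : 1 ≤ n)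
    (hn : n ≤ Fintype.card V) (hsimple : #{v | hA.eigenvalues v = nthEigenvalue A n} ≤ 1) :
    #{v | hA.eigenvalues v ≤ nthEigenvalue A n} = n := by
  have hsplit := card_filter_le_eq_card_filter_lt_add_card_filter_eq hA.eigenvalues
    (nthEigenvalue A n)
  have hle := (hA.nthEigenvalue_le_iff hn₀ hn _).1 le_rfl
  have hlt := mt (hA.nthEigenvalue_lt_iff hn₀ hn (nthEigenvalue A n)).2 (lt_irrefl _)
  omega

end Matrix.IsHermitian

theorem signedLaplacian_isSymm_s5 [Fintype V] [DecidableEq V] (G : SimpleGraph V)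
    [DecidableRel G.Adj] {w σ : V → V → ℝ} (hw : ∀ i j, w i j = w j i)
    (hσ : ∀ i j, σ i j = σ j i) : (signedLaplacian G w σ).IsSymm := by
  ext x y
  simp only [transpose_apply, signedLaplacian, of_apply, hw x y, hσ x y, G.adj_comm x y]
  grind

theorem partSgn_comm {ν : ℕ} (P : V → Fin ν) (i j : V) : partSgn P i j = partSgn P j i := by
  simp only [partSgn, eq_comm]

theorem Bmat_isSymm [DecidableEq V] (i j : V) (a : ℝ) : (Bmat i j a).IsSymm := by
  ext x y
  simp only [transpose_apply, Bmat, of_apply]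
  grind

theorem Bmat_mulVec [Fintype V] [DecidableEq V] {i j : V} (hij : i ≠ j) (a : ℝ) (x : V → ℝ) :
    Bmat i j a *ᵥ x = Pi.single i (a * x i - x j) + Pi.single j (a⁻¹ * x j - x i) := by
  ext v
  rcases eq_or_ne v i with rfl | hvi
  · simp [mulVec, dotProduct, Bmat, hij, hij.symm, ite_mul, sum_ite, filter_eq',
      sub_eq_add_neg]
  · rcases eq_or_ne v j with rfl | hvj
    · simp [mulVec, dotProduct, Bmat, hij, hvi, ite_mul, sum_ite, filter_eq',
        sub_eq_add_neg]
    · simp [mulVec, dotProduct, Bmat, hvi, hvj]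

theorem Bmat_mulVec_eq_zero [Fintype V] [DecidableEq V] {i j : V} (hij : i ≠ j) {a : ℝ}
    (ha : a ≠ 0) {x : V → ℝ} (hx : a * x i = x j) : Bmat i j a *ᵥ x = 0 := by
  rw [Bmat_mulVec hij, ← hx, inv_mul_cancel_left₀ ha]
  simp

theorem add_smul_Bmat_mulVec_of_mul_eq [Fintype V] [DecidableEq V] (A : Matrix V V ℝ) (c : ℝ)
    {i j : V} (hij : i ≠ j) {a : ℝ} (ha : a ≠ 0) {x : V → ℝ} (hx : a * x i = x j) :
    (A + c • Bmat i j a) *ᵥ x = A *ᵥ x := by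
  rw [add_mulVec, smul_mulVec, Bmat_mulVec_eq_zero hij ha hx, smul_zero, add_zero]

theorem stmt5_general [Fintype V] [DecidableEq V] (G : SimpleGraph V) [DecidableRel G.Adj]
    (w : V → V → ℝ)
    (hwsymm : ∀ i j, w i j = w j i)
    {ν : ℕ} (P : V → Fin ν)
    (O : Finset (V × V))
    (hO : ∀ p ∈ O, G.Adj p.1 p.2 ∧ P p.1 ≠ P p.2)
    (i j : V) (hij : (i, j) ∈ O)
    (ψ : V → ℝ) (lam : ℝ) (n : ℕ) (hn1 : 1 ≤ n) (hn2 : n ≤ Fintype.card V)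
    (heig : (signedLaplacian G w (partSgn P)).mulVec ψ = lam • ψ)
    (hψnz : ∀ v, ψ v ≠ 0)
    (hsimple : IsSimpleEigenvalue (signedLaplacian G w (partSgn P)) lam)
    (hlam : lam = nthEigenvalue (signedLaplacian G w (partSgn P)) n) :
    (signedLaplacian G w (partSgn P) + w i j • Bmat i j (ψ j / ψ i)).mulVec ψ = lam • ψ ∧
    ∃ m : ℕ, 1 ≤ m ∧ m ≤ Fintype.card V ∧ |(n : ℤ) - (m : ℤ)| ≤ 1 ∧
      lam = nthEigenvalue
        (signedLaplacian G w (partSgn P) + w i j • Bmat i j (ψ j / ψ i)) m := by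
  set A := signedLaplacian G w (partSgn P)
  set a := ψ j / ψ i
  have hne : i ≠ j := G.ne_of_adj (hO (i, j) hij).1
  have ha : a ≠ 0 := div_ne_zero (hψnz j) (hψnz i)
  have hA : A.IsHermitian := isHermitian_iff_isSymm.2 <|
    signedLaplacian_isSymm_s5 G hwsymm (partSgn_comm P)
  have hB : (A + w i j • Bmat i j a).IsHermitian := isHermitian_iff_isSymm.2 <|
    (isHermitian_iff_isSymm.1 hA).add ((Bmat_isSymm i j a).smul _)
  have hBψ : (A + w i j • Bmat i j a) *ᵥ ψ = lam • ψ := by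
    rw [add_smul_Bmat_mulVec_of_mul_eq A _ hne ha (div_mul_cancel₀ _ (hψnz i)), heig]
  refine ⟨hBψ, ?_⟩
  have hcountA : #{v | hA.eigenvalues v ≤ lam} = n := by
    subst hlam
    refine hA.card_eigenvalues_le_nthEigenvalue hn1 hn2 ?_
    exact (hA.card_eigenvalues_eq_le_finrank_eigenspace _).trans hsimple.le
  have hker : ∀ x ∈ LinearMap.ker (a • LinearMap.proj i - LinearMap.proj j : (V → ℝ) →ₗ[ℝ] ℝ),
      x ⬝ᵥ ((A + w i j • Bmat i j a) *ᵥ x) = x ⬝ᵥ (A *ᵥ x) := fun x hx => by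
    rw [add_smul_Bmat_mulVec_of_mul_eq A _ hne ha (sub_eq_zero.1 hx)]
  have hAB := hA.card_eigenvalues_le_le_add_one hB _ hker lam
  have hBA := hB.card_eigenvalues_le_le_add_one hA _ (fun x hx => (hker x hx).symm) lam
  obtain ⟨v, hv⟩ := hB.exists_eigenvalues_eq (fun h => hψnz i (by simp [h])) hBψ
  refine ⟨#{v | hB.eigenvalues v ≤ lam}, card_pos.2 ⟨v, by simp [hv]⟩, card_le_univ _, ?_,
    (hB.nthEigenvalue_card_eigenvalues_le ⟨v, hv⟩).symm⟩
  rw [abs_le]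
  omega

/-- If `ψ` is a non-degenerate eigenvector of the partition Laplacian
`L^{∂P}` whose eigenvalue `λ` is the `n`-th smallest, and `(i,j)` is an oriented boundary
edge, then with `α₀ = ψ_j / ψ_i` the vector `ψ` is still an eigenvector of
`L^{∂P} + w_ij B_ij(α₀)` with eigenvalue `λ`, and `λ` is the `m`-th smallest eigenvalue of
the perturbed matrix for some `m` with `|n - m| ≤ 1`. -/
theorem stmt5 [Fintype V] [DecidableEq V] (G : SimpleGraph V) [DecidableRel G.Adj]
    (hGconn : G.Connected) (w : V → V → ℝ)
    (hwsymm : ∀ i j, w i j = w j i) (hwpos : ∀ i j, G.Adj i j → 0 < w i j)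
    (hw0 : ∀ i j, ¬ G.Adj i j → w i j = 0)
    {ν : ℕ} (P : V → Fin ν) (hPsurj : Function.Surjective P)
    (hPconn : ∀ k : Fin ν, (G.induce {v | P v = k}).Connected)
    (O : Finset (V × V))
    (hO : ∀ p ∈ O, G.Adj p.1 p.2 ∧ P p.1 ≠ P p.2)
    (hOorient : ∀ i j, G.Adj i j → P i ≠ P j → ((i, j) ∈ O ↔ (j, i) ∉ O))
    (i j : V) (hij : (i, j) ∈ O)
    (ψ : V → ℝ) (lam : ℝ) (n : ℕ) (hn1 : 1 ≤ n) (hn2 : n ≤ Fintype.card V)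
    (heig : (signedLaplacian G w (partSgn P)).mulVec ψ = lam • ψ)
    (hψnz : ∀ v, ψ v ≠ 0)
    (hsimple : IsSimpleEigenvalue (signedLaplacian G w (partSgn P)) lam)
    (hlam : lam = nthEigenvalue (signedLaplacian G w (partSgn P)) n) :
    (signedLaplacian G w (partSgn P) + w i j • Bmat i j (ψ j / ψ i)).mulVec ψ = lam • ψ ∧
    ∃ m : ℕ, 1 ≤ m ∧ m ≤ Fintype.card V ∧ |(n : ℤ) - (m : ℤ)| ≤ 1 ∧
      lam = nthEigenvalue
        (signedLaplacian G w (partSgn P) + w i j • Bmat i j (ψ j / ψ i)) m :=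
  stmt5_general G w hwsymm P O hO i j hij ψ lam n hn1 hn2 heig hψnz hsimple hlam
end
end

section
/- Let P be a ν-partition of G with ν ≥ 2. If α* ∈ ℝ^{∂P} has all entries positive and is a local minimum of the map α ↦ Λ(P,α) on the set of parameter vectors with all entries positive, then (P,α*) is an equipartition, i.e. λ_1(G_1,α*) = λ_1(G_2,α*) = … = λ_1(G_ν,α*). -/
open Matrix Finset

noncomputable section

variable {V : Type*}

/-!
Suppose `(P, α*)` is not an equipartition. Since `G` is connected, some boundary edge `(i, j)`
joins a part `V_k` with `λ₁(G_k) = Λ` to a part `V_l` with `λ₁(G_l) < Λ`. Changing the single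
parameter `α_ij` slightly in the direction that lowers the diagonal entry of `L(G_k)` at the
endpoint in `V_k` strictly lowers `λ₁(G_k)`: test the Rayleigh quotient against the first
eigenvector of the block, which is positive (Perron–Frobenius) because `G_k` is connected and the
off-diagonal entries are nonpositive. Meanwhile `λ₁(G_l)` moves continuously and stays below `Λ`,
and all other blocks are unchanged. Local minimality forces `Λ` to stay the same, so the new
parameter is again a local minimum, now with one maximal part fewer; induction on the number of
maximal parts gives a contradiction.
-/

section Rayleigh

variable {W : Type*} [Fintype W] [DecidableEq W] {A : Matrix W W ℝ}

open scoped MatrixOrder in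
lemma Matrix.IsHermitian.posSemidef_sub_smul_one (hA : A.IsHermitian) {c : ℝ}
    (hc : ∀ i, c ≤ hA.eigenvalues i) : (A - c • 1).PosSemidef := by
  have h : algebraMap ℝ (Matrix W W ℝ) c ≤ A := by
    rw [algebraMap_le_iff_le_spectrum (ha := hA.isSelfAdjoint),
      hA.spectrum_real_eq_range_eigenvalues]
    rintro _ ⟨i, rfl⟩
    exact hc i
  simpa [Matrix.le_iff, Algebra.algebraMap_eq_smul_one] using h

lemma Matrix.IsHermitian.mul_dotProduct_self_le (hA : A.IsHermitian) {c : ℝ}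
    (hc : ∀ i, c ≤ hA.eigenvalues i) (x : W → ℝ) : c * (x ⬝ᵥ x) ≤ x ⬝ᵥ A *ᵥ x := by
  have := (hA.posSemidef_sub_smul_one hc).dotProduct_mulVec_nonneg x
  simpa [sub_mulVec, dotProduct_sub, smul_mulVec] using this

lemma Matrix.IsHermitian.mulVec_eq_smul_of_dotProduct_eq (hA : A.IsHermitian) {c : ℝ}
    (hc : ∀ i, c ≤ hA.eigenvalues i) {x : W → ℝ} (hx : x ⬝ᵥ A *ᵥ x = c * (x ⬝ᵥ x)) :
    A *ᵥ x = c • x := by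
  have := ((hA.posSemidef_sub_smul_one hc).dotProduct_mulVec_zero_iff x).mp
    (by simp [sub_mulVec, dotProduct_sub, smul_mulVec, hx])
  rwa [sub_mulVec, smul_mulVec, one_mulVec, sub_eq_zero] at this

variable [Nonempty W]

lemma nthEigenvalue_one_le_eigenvalues (hA : A.IsHermitian) (i : W) :
    nthEigenvalue A 1 ≤ hA.eigenvalues i := by
  have hcard : 1 - 1 < Fintype.card W := by simp [Fintype.card_pos]
  rw [nthEigenvalue, dif_pos ⟨hA, hcard⟩]
  set f : Fin (Fintype.card W) → ℝ := fun i => hA.eigenvalues ((Fintype.equivFin W).symm i)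
  simpa [f] using Tuple.monotone_sort f (Fin.zero_le ((Tuple.sort f).symm (Fintype.equivFin W i)))

lemma exists_eigenvalues_eq_nthEigenvalue_one (hA : A.IsHermitian) :
    ∃ i, hA.eigenvalues i = nthEigenvalue A 1 := by
  have hcard : 1 - 1 < Fintype.card W := by simp [Fintype.card_pos]
  rw [nthEigenvalue, dif_pos ⟨hA, hcard⟩]
  exact ⟨_, rfl⟩

lemma nthEigenvalue_one_le_dotProduct (hA : A.IsHermitian) {x : W → ℝ} (hx : x ⬝ᵥ x = 1) :
    nthEigenvalue A 1 ≤ x ⬝ᵥ A *ᵥ x := by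
  simpa [hx] using hA.mul_dotProduct_self_le (nthEigenvalue_one_le_eigenvalues hA) x

lemma exists_unit_mulVec_eq_nthEigenvalue_one (hA : A.IsHermitian) :
    ∃ u : W → ℝ, u ⬝ᵥ u = 1 ∧ A *ᵥ u = nthEigenvalue A 1 • u := by
  obtain ⟨i, hi⟩ := exists_eigenvalues_eq_nthEigenvalue_one hA
  refine ⟨hA.eigenvectorBasis i, ?_, hi ▸ hA.mulVec_eigenvectorBasis i⟩
  have h := orthonormal_iff_ite.mp hA.eigenvectorBasis.orthonormal i i
  rw [if_pos rfl, EuclideanSpace.inner_eq_star_dotProduct] at h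
  simpa [dotProduct_comm] using h

lemma exists_pos_unit_mulVec_eq_nthEigenvalue_one (hA : A.IsHermitian) {H : SimpleGraph W}
    (hH : H.Connected) (hoff : ∀ a b, a ≠ b → A a b ≤ 0) (hadj : ∀ a b, H.Adj a b → A a b < 0) :
    ∃ u : W → ℝ, u ⬝ᵥ u = 1 ∧ (∀ x, 0 < u x) ∧ A *ᵥ u = nthEigenvalue A 1 • u := by
  obtain ⟨u, hu1, hu⟩ := exists_unit_mulVec_eq_nthEigenvalue_one hA
  set v : W → ℝ := fun x => |u x|
  have hv1 : v ⬝ᵥ v = 1 := by simpa [v, dotProduct, abs_mul_abs_self] using hu1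
  have hterm : ∀ x y, v x * (A x y * v y) ≤ u x * (A x y * u y) := by
    intro x y
    rcases eq_or_ne x y with rfl | hxy
    · have := abs_mul_abs_self (u x)
      simp only [v]
      linear_combination A x x * this
    · have : u x * u y ≤ v x * v y := (le_abs_self _).trans (abs_mul _ _).le
      nlinarith [hoff x y hxy]
  -- `|u|` is a Rayleigh minimiser as well, hence an eigenvector
  have hev : A *ᵥ v = nthEigenvalue A 1 • v := by
    refine hA.mulVec_eq_smul_of_dotProduct_eq (nthEigenvalue_one_le_eigenvalues hA)
      (le_antisymm ?_ ?_)
    · calc v ⬝ᵥ A *ᵥ v ≤ u ⬝ᵥ A *ᵥ u := by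
            simp only [dotProduct, mulVec, Finset.mul_sum]
            exact Finset.sum_le_sum fun x _ => Finset.sum_le_sum fun y _ => hterm x y
        _ = nthEigenvalue A 1 * (v ⬝ᵥ v) := by rw [hu, dotProduct_smul, hu1, hv1, smul_eq_mul]
    · simpa [hv1] using nthEigenvalue_one_le_dotProduct hA hv1
  have hzero : ∀ x y, H.Adj x y → v x = 0 → v y = 0 := by
    intro x y hxy hx
    have hsum : ∑ z, A x z * v z = 0 := by simpa [hx, mulVec, dotProduct] using congrFun hev x
    have hnonpos : ∀ z ∈ Finset.univ, A x z * v z ≤ 0 := fun z _ => by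
      rcases eq_or_ne x z with rfl | hxz
      · simp [hx]
      · exact mul_nonpos_of_nonpos_of_nonneg (hoff x z hxz) (abs_nonneg _)
    have := (Finset.sum_eq_zero_iff_of_nonpos hnonpos).mp hsum y (Finset.mem_univ y)
    exact (mul_eq_zero.mp this).resolve_left (hadj x y hxy).ne
  refine ⟨v, hv1, fun x => (abs_nonneg _).lt_of_ne' fun hx => ?_, hev⟩
  obtain ⟨y, hy⟩ : ∃ y, v y ≠ 0 := by
    by_contra! h
    simp [dotProduct, h] at hv1
  obtain ⟨d, -, hd0, hd1⟩ := (hH.preconnected x y).some.exists_boundary_dart {z | v z = 0} hx hy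
  exact hd1 (hzero _ _ d.adj hd0)

lemma nthEigenvalue_one_add_diagonal_le (hA : A.IsHermitian) {u : W → ℝ} (hu1 : u ⬝ᵥ u = 1)
    (hu : A *ᵥ u = nthEigenvalue A 1 • u) (D : W → ℝ) :
    nthEigenvalue (A + diagonal D) 1 ≤ nthEigenvalue A 1 + ∑ x, D x * u x ^ 2 := by
  calc nthEigenvalue (A + diagonal D) 1 ≤ u ⬝ᵥ (A + diagonal D) *ᵥ u :=
        nthEigenvalue_one_le_dotProduct (hA.add (isHermitian_diagonal D)) hu1
    _ = nthEigenvalue A 1 + ∑ x, D x * u x ^ 2 := by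
        rw [add_mulVec, dotProduct_add, hu, dotProduct_smul, hu1, smul_eq_mul, mul_one]
        simp only [dotProduct, mulVec_diagonal]
        congr 1
        exact Finset.sum_congr rfl fun x _ => by ring

lemma nthEigenvalue_one_add_diagonal_single_le (hA : A.IsHermitian) (a : W) (δ : ℝ) :
    nthEigenvalue (A + diagonal (Pi.single a δ)) 1 ≤ nthEigenvalue A 1 + |δ| := by
  obtain ⟨u, hu1, hu⟩ := exists_unit_mulVec_eq_nthEigenvalue_one hA
  have hua : u a ^ 2 ≤ 1 := by
    rw [← hu1, sq]
    exact Finset.single_le_sum (f := fun x => u x * u x) (fun x _ => mul_self_nonneg _)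
      (Finset.mem_univ a)
  refine (nthEigenvalue_one_add_diagonal_le hA hu1 hu _).trans ?_
  simp only [Pi.single_apply, ite_mul, zero_mul, Finset.sum_ite_eq', Finset.mem_univ, if_true]
  nlinarith [le_abs_self δ, abs_nonneg δ, sq_nonneg (u a)]

lemma nthEigenvalue_one_add_diagonal_single_lt (hA : A.IsHermitian) {u : W → ℝ}
    (hu1 : u ⬝ᵥ u = 1) (hu : A *ᵥ u = nthEigenvalue A 1 • u) {a : W} (ha : u a ≠ 0) {δ : ℝ}
    (hδ : δ < 0) : nthEigenvalue (A + diagonal (Pi.single a δ)) 1 < nthEigenvalue A 1 := by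
  refine (nthEigenvalue_one_add_diagonal_le hA hu1 hu _).trans_lt ?_
  simp only [Pi.single_apply, ite_mul, zero_mul, Finset.sum_ite_eq', Finset.mem_univ, if_true]
  nlinarith [pow_pos (abs_pos.mpr ha) 2, sq_abs (u a)]

end Rayleigh

lemma iSup_eq_and_card_argmax_lt {ι : Type*} [Fintype ι] [Nonempty ι] {f g : ι → ℝ} {k l : ι}
    (hkmax : f k = ⨆ i, f i) (hk : g k < f k) (hl : g l < ⨆ i, f i)
    (hrest : ∀ m, m ≠ k → m ≠ l → g m = f m) (hge : ⨆ i, f i ≤ ⨆ i, g i) :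
    ⨆ i, g i = ⨆ i, f i ∧
      #{m | g m = ⨆ i, g i} < #{m | f m = ⨆ i, f i} := by
  have hle : ∀ m, g m ≤ ⨆ i, f i := fun m => by
    by_cases hmk : m = k
    · subst hmk; linarith
    by_cases hml : m = l
    · subst hml; exact hl.le
    rw [hrest m hmk hml]
    exact le_ciSup (Finite.bddAbove_range f) m
  have heq : ⨆ i, g i = ⨆ i, f i := le_antisymm (ciSup_le hle) hge
  refine ⟨heq, Finset.card_lt_card ((Finset.ssubset_iff_of_subset fun m hm => ?_).mpr ⟨k, ?_, ?_⟩)⟩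
  · simp only [Finset.mem_filter, Finset.mem_univ, true_and, heq] at hm ⊢
    have hmk : m ≠ k := by rintro rfl; linarith
    have hml : m ≠ l := by rintro rfl; linarith
    rwa [← hrest m hmk hml]
  · simpa using hkmax
  · simp only [Finset.mem_filter, Finset.mem_univ, true_and, heq]
    linarith

section PartitionMatrices

lemma Bmat_isHermitian [DecidableEq V] (i j : V) (a : ℝ) : (Bmat i j a).IsHermitian := by
  refine IsHermitian.ext fun x y => ?_
  simp only [Bmat, of_apply, star_trivial]
  split_ifs <;> grind

lemma Bmat_eq_add_diagonal [DecidableEq V] {i j : V} (hij : i ≠ j) (a b : ℝ) :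
    Bmat i j b = Bmat i j a + diagonal (Pi.single i (b - a) + Pi.single j (b⁻¹ - a⁻¹)) := by
  ext x y
  simp only [Bmat, Matrix.add_apply, of_apply, diagonal_apply, Pi.add_apply, Pi.single_apply]
  split_ifs <;> grind

variable [Fintype V] [DecidableEq V]

lemma signedLaplacian_isHermitian_s9 (G : SimpleGraph V) [DecidableRel G.Adj] {w σ : V → V → ℝ}
    (hw : ∀ i j, w i j = w j i) (hσ : ∀ i j, σ i j = σ j i) :
    (signedLaplacian G w σ).IsHermitian := by
  refine IsHermitian.ext fun i j => ?_
  simp only [signedLaplacian, of_apply, star_trivial, G.adj_comm j i, hw j i, hσ j i,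
    eq_comm (a := j)]
  split_ifs with h <;> simp_all

lemma paramMatrix_isHermitian (G : SimpleGraph V) [DecidableRel G.Adj] {w : V → V → ℝ}
    (hw : ∀ i j, w i j = w j i) {ν : ℕ} (P : V → Fin ν) (O : Finset (V × V))
    (α : V × V → ℝ) : (paramMatrix G w P O α).IsHermitian := by
  have hσ : ∀ i j, partSgn P i j = partSgn P j i := fun i j => by simp [partSgn, eq_comm]
  refine (signedLaplacian_isHermitian_s9 G hw hσ).add ?_
  rw [isHermitian_iff_isSelfAdjoint]
  exact isSelfAdjoint_sum _ fun p _ =>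
    (IsSelfAdjoint.all _).smul (Bmat_isHermitian _ _ _).isSelfAdjoint

variable {G : SimpleGraph V} [DecidableRel G.Adj] {w : V → V → ℝ} {ν : ℕ} {P : V → Fin ν}
  {O : Finset (V × V)}

lemma paramMatrix_update (α : V × V → ℝ) {p : V × V} (hp : p ∈ O) (hp12 : p.1 ≠ p.2) (c : ℝ) :
    paramMatrix G w P O (Function.update α p c) = paramMatrix G w P O α +
      diagonal (Pi.single p.1 (w p.1 p.2 * (c - α p)) +
        Pi.single p.2 (w p.1 p.2 * (c⁻¹ - (α p)⁻¹))) := by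
  have hrest : ∑ q ∈ O.erase p, w q.1 q.2 • Bmat q.1 q.2 (Function.update α p c q) =
      ∑ q ∈ O.erase p, w q.1 q.2 • Bmat q.1 q.2 (α q) :=
    Finset.sum_congr rfl fun q hq => by rw [Function.update_of_ne (Finset.ne_of_mem_erase hq)]
  have hdiag : w p.1 p.2 • diagonal (Pi.single p.1 (c - α p) + Pi.single p.2 (c⁻¹ - (α p)⁻¹)) =
      diagonal (Pi.single p.1 (w p.1 p.2 * (c - α p)) +
        Pi.single p.2 (w p.1 p.2 * (c⁻¹ - (α p)⁻¹)) : V → ℝ) := by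
    rw [← diagonal_smul, smul_add, ← Pi.single_smul, ← Pi.single_smul]
    rfl
  simp only [paramMatrix, ← Finset.add_sum_erase O _ hp, hrest, Function.update_self,
    Bmat_eq_add_diagonal hp12 (α p) c, smul_add, hdiag]
  abel

omit [Fintype V] in
lemma blockMatrix_add_diagonal (M : Matrix V V ℝ) (D : V → ℝ) (k : Fin ν) :
    blockMatrix (M + diagonal D) P k = blockMatrix M P k + diagonal (D ∘ Subtype.val) := by
  simp only [blockMatrix, ← submatrix_diagonal _ _ Subtype.val_injective]
  rfl

lemma paramMatrix_apply_of_ne (hO : ∀ p ∈ O, P p.1 ≠ P p.2) (α : V × V → ℝ) {a b : V}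
    (hab : a ≠ b) (hP : P a = P b) :
    paramMatrix G w P O α a b = if G.Adj a b then -w a b else 0 := by
  have hB : ∀ p ∈ O, w p.1 p.2 * Bmat p.1 p.2 (α p) a b = 0 := fun p hp => by
    have := hO p hp
    simp only [Bmat, of_apply]
    split_ifs <;> grind
  simp [paramMatrix, signedLaplacian, hab, partSgn, hP, Matrix.sum_apply, Finset.sum_eq_zero hB]

lemma exists_pos_eigenvector_blockMatrix (hw : ∀ i j, w i j = w j i)
    (hwpos : ∀ i j, G.Adj i j → 0 < w i j) (hO : ∀ p ∈ O, P p.1 ≠ P p.2) (α : V × V → ℝ)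
    {k : Fin ν} (hk : (G.induce {v | P v = k}).Connected) :
    ∃ u : {v // P v = k} → ℝ, u ⬝ᵥ u = 1 ∧ (∀ x, 0 < u x) ∧
      blockMatrix (paramMatrix G w P O α) P k *ᵥ u = lam1Block (paramMatrix G w P O α) P k • u := by
  have : Nonempty {v // P v = k} := hk.nonempty
  have hentry : ∀ a b : {v // P v = k}, a ≠ b → blockMatrix (paramMatrix G w P O α) P k a b =
      if G.Adj a b then -w a b else 0 := fun a b hab =>
    paramMatrix_apply_of_ne hO α (Subtype.coe_ne_coe.mpr hab) (a.2.trans b.2.symm)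
  refine exists_pos_unit_mulVec_eq_nthEigenvalue_one
    ((paramMatrix_isHermitian G hw P O α).submatrix _) hk (fun a b hab => ?_) (fun a b hab => ?_)
  · rw [hentry a b hab]
    split_ifs with h
    · exact neg_nonpos.mpr (hwpos _ _ h).le
    · rfl
  · rw [hentry a b hab.ne, if_pos (show G.Adj a b from hab)]
    exact neg_neg_of_pos (hwpos _ _ hab)

omit [Fintype V] in
lemma single_comp_subtype_val {q : V → Prop} [DecidablePred q] (a : V) (x : ℝ) :
    (Pi.single a x ∘ Subtype.val : {v // q v} → ℝ) =
      if h : q a then Pi.single ⟨a, h⟩ x else 0 := by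
  split_ifs with h
  · exact Function.update_comp_eq_of_injective (0 : V → ℝ) Subtype.val_injective ⟨a, h⟩ x
  · exact Function.update_comp_eq_of_forall_ne (0 : V → ℝ) x fun v hv => h (hv ▸ v.2)

lemma blockMatrix_paramMatrix_update (hO : ∀ p ∈ O, P p.1 ≠ P p.2) (α : V × V → ℝ)
    {p : V × V} (hp : p ∈ O) (c : ℝ) (k : Fin ν) :
    blockMatrix (paramMatrix G w P O (Function.update α p c)) P k =
      blockMatrix (paramMatrix G w P O α) P k + diagonal
        ((if h : P p.1 = k then Pi.single ⟨p.1, h⟩ (w p.1 p.2 * (c - α p)) else 0) +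
          (if h : P p.2 = k then Pi.single ⟨p.2, h⟩ (w p.1 p.2 * (c⁻¹ - (α p)⁻¹)) else 0)) := by
  have hp12 : p.1 ≠ p.2 := fun h => hO p hp (congrArg P h)
  rw [paramMatrix_update α hp hp12, blockMatrix_add_diagonal, Pi.add_comp,
    single_comp_subtype_val, single_comp_subtype_val]

lemma lam1Block_update_le (hw : ∀ i j, w i j = w j i) (hO : ∀ p ∈ O, P p.1 ≠ P p.2)
    (α : V × V → ℝ) {p : V × V} (hp : p ∈ O) (c : ℝ) (k : Fin ν) :
    lam1Block (paramMatrix G w P O (Function.update α p c)) P k ≤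
      lam1Block (paramMatrix G w P O α) P k +
        (|w p.1 p.2 * (c - α p)| + |w p.1 p.2 * (c⁻¹ - (α p)⁻¹)|) := by
  have hA : (blockMatrix (paramMatrix G w P O α) P k).IsHermitian :=
    (paramMatrix_isHermitian G hw P O α).submatrix _
  have hp12 := hO p hp
  rw [lam1Block, lam1Block, blockMatrix_paramMatrix_update hO α hp]
  by_cases h1 : P p.1 = k
  · have h2 : ¬P p.2 = k := fun h2 => hp12 (h1.trans h2.symm)
    have : Nonempty {v // P v = k} := ⟨⟨p.1, h1⟩⟩
    rw [dif_pos h1, dif_neg h2, add_zero]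
    linarith [nthEigenvalue_one_add_diagonal_single_le hA ⟨p.1, h1⟩ (w p.1 p.2 * (c - α p)),
      abs_nonneg (w p.1 p.2 * (c⁻¹ - (α p)⁻¹))]
  by_cases h2 : P p.2 = k
  · have : Nonempty {v // P v = k} := ⟨⟨p.2, h2⟩⟩
    rw [dif_neg h1, dif_pos h2, zero_add]
    linarith [nthEigenvalue_one_add_diagonal_single_le hA ⟨p.2, h2⟩ (w p.1 p.2 * (c⁻¹ - (α p)⁻¹)),
      abs_nonneg (w p.1 p.2 * (c - α p))]
  · rw [dif_neg h1, dif_neg h2, add_zero, diagonal_zero', add_zero]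
    exact le_add_of_nonneg_right (by positivity)

lemma lam1Block_update_of_ne (hO : ∀ p ∈ O, P p.1 ≠ P p.2) (α : V × V → ℝ) {p : V × V}
    (hp : p ∈ O) (c : ℝ) {k : Fin ν} (h1 : P p.1 ≠ k) (h2 : P p.2 ≠ k) :
    lam1Block (paramMatrix G w P O (Function.update α p c)) P k =
      lam1Block (paramMatrix G w P O α) P k := by
  rw [lam1Block, lam1Block, blockMatrix_paramMatrix_update hO α hp, dif_neg h1, dif_neg h2,
    add_zero, diagonal_zero', add_zero]

lemma lam1Block_update_fst_lt (hw : ∀ i j, w i j = w j i) (hwpos : ∀ i j, G.Adj i j → 0 < w i j)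
    (hO : ∀ p ∈ O, G.Adj p.1 p.2 ∧ P p.1 ≠ P p.2) (α : V × V → ℝ) {p : V × V} (hp : p ∈ O)
    (hconn : (G.induce {v | P v = P p.1}).Connected) {c : ℝ} (hc : c < α p) :
    lam1Block (paramMatrix G w P O (Function.update α p c)) P (P p.1) <
      lam1Block (paramMatrix G w P O α) P (P p.1) := by
  have hO' : ∀ q ∈ O, P q.1 ≠ P q.2 := fun q hq => (hO q hq).2
  have : Nonempty {v // P v = P p.1} := ⟨⟨p.1, rfl⟩⟩
  obtain ⟨u, hu1, hupos, hu⟩ := exists_pos_eigenvector_blockMatrix hw hwpos hO' α hconn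
  rw [lam1Block, blockMatrix_paramMatrix_update hO' α hp, dif_pos rfl,
    dif_neg (hO p hp).2.symm, add_zero]
  exact nthEigenvalue_one_add_diagonal_single_lt
    ((paramMatrix_isHermitian G hw P O α).submatrix _) hu1 hu (hupos _).ne'
    (mul_neg_of_pos_of_neg (hwpos _ _ (hO p hp).1) (sub_neg.mpr hc))

lemma lam1Block_update_snd_lt (hw : ∀ i j, w i j = w j i) (hwpos : ∀ i j, G.Adj i j → 0 < w i j)
    (hO : ∀ p ∈ O, G.Adj p.1 p.2 ∧ P p.1 ≠ P p.2) (α : V × V → ℝ) {p : V × V} (hp : p ∈ O)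
    (hconn : (G.induce {v | P v = P p.2}).Connected) (hαp : 0 < α p) {c : ℝ} (hc : α p < c) :
    lam1Block (paramMatrix G w P O (Function.update α p c)) P (P p.2) <
      lam1Block (paramMatrix G w P O α) P (P p.2) := by
  have hO' : ∀ q ∈ O, P q.1 ≠ P q.2 := fun q hq => (hO q hq).2
  have : Nonempty {v // P v = P p.2} := ⟨⟨p.2, rfl⟩⟩
  obtain ⟨u, hu1, hupos, hu⟩ := exists_pos_eigenvector_blockMatrix hw hwpos hO' α hconn
  rw [lam1Block, blockMatrix_paramMatrix_update hO' α hp, dif_neg (hO p hp).2, dif_pos rfl,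
    zero_add]
  exact nthEigenvalue_one_add_diagonal_single_lt
    ((paramMatrix_isHermitian G hw P O α).submatrix _) hu1 hu (hupos _).ne'
    (mul_neg_of_pos_of_neg (hwpos _ _ (hO p hp).1) (sub_neg.mpr (inv_strictAnti₀ hαp hc)))

open Filter Topology in
lemma exists_near_lam1Block_lt (hw : ∀ i j, w i j = w j i) (hwpos : ∀ i j, G.Adj i j → 0 < w i j)
    (hO : ∀ p ∈ O, G.Adj p.1 p.2 ∧ P p.1 ≠ P p.2) {α : V × V → ℝ} (hα : ∀ q ∈ O, 0 < α q)
    {p : V × V} (hp : p ∈ O) {k l : Fin ν} (hkl : k = P p.1 ∧ l = P p.2 ∨ k = P p.2 ∧ l = P p.1)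
    (hk : (G.induce {v | P v = k}).Connected) {L : ℝ}
    (hl : lam1Block (paramMatrix G w P O α) P l < L) {U : Set (V × V → ℝ)} (hU : U ∈ 𝓝 α) :
    ∃ α' ∈ U, (∀ q ∈ O, 0 < α' q) ∧
      lam1Block (paramMatrix G w P O α') P k < lam1Block (paramMatrix G w P O α) P k ∧
      lam1Block (paramMatrix G w P O α') P l < L ∧
      ∀ m, m ≠ k → m ≠ l →
        lam1Block (paramMatrix G w P O α') P m = lam1Block (paramMatrix G w P O α) P m := by
  have hO' : ∀ q ∈ O, P q.1 ≠ P q.2 := fun q hq => (hO q hq).2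
  have ha : 0 < α p := hα p hp
  set δ : ℝ → ℝ := fun c => |w p.1 p.2 * (c - α p)| + |w p.1 p.2 * (c⁻¹ - (α p)⁻¹)|
  have hδ : Tendsto δ (𝓝 (α p)) (𝓝 0) := by
    have : ContinuousAt δ (α p) := by fun_prop (disch := exact ha.ne')
    simpa [δ] using this.tendsto
  have hupdate : Tendsto (Function.update α p) (𝓝 (α p)) (𝓝 α) := by
    simpa using ((continuous_const.update p continuous_id).tendsto (α p) :
      Tendsto (fun c => Function.update α p c) _ _)
  have hnear : ∀ᶠ c in 𝓝 (α p), 0 < c ∧ Function.update α p c ∈ U ∧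
      lam1Block (paramMatrix G w P O α) P l + δ c < L :=
    (lt_mem_nhds ha).and ((hupdate.eventually hU).and
      ((hδ.const_add _).eventually (gt_mem_nhds (by simpa using hl))))
  obtain ⟨c, ⟨hc0, hcU, hcL⟩, hck⟩ : ∃ c, (0 < c ∧ Function.update α p c ∈ U ∧
      lam1Block (paramMatrix G w P O α) P l + δ c < L) ∧
      lam1Block (paramMatrix G w P O (Function.update α p c)) P k <
        lam1Block (paramMatrix G w P O α) P k := by
    rcases hkl with ⟨rfl, -⟩ | ⟨rfl, -⟩
    · obtain ⟨c, hc, hca⟩ := ((hnear.filter_mono nhdsWithin_le_nhds).and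
        (self_mem_nhdsWithin (s := Set.Iio (α p)))).exists
      exact ⟨c, hc, lam1Block_update_fst_lt hw hwpos hO α hp hk hca⟩
    · obtain ⟨c, hc, hca⟩ := ((hnear.filter_mono nhdsWithin_le_nhds).and
        (self_mem_nhdsWithin (s := Set.Ioi (α p)))).exists
      exact ⟨c, hc, lam1Block_update_snd_lt hw hwpos hO α hp hk ha hca⟩
  have hm : ∀ m, m ≠ k → m ≠ l → P p.1 ≠ m ∧ P p.2 ≠ m := fun m hmk hml => by
    rcases hkl with ⟨rfl, rfl⟩ | ⟨rfl, rfl⟩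
    exacts [⟨hmk.symm, hml.symm⟩, ⟨hml.symm, hmk.symm⟩]
  refine ⟨Function.update α p c, hcU, fun q hq => ?_, hck,
    (lam1Block_update_le hw hO' α hp c l).trans_lt hcL,
    fun m hmk hml => lam1Block_update_of_ne hO' α hp c (hm m hmk hml).1 (hm m hmk hml).2⟩
  rcases eq_or_ne q p with rfl | hqp
  · rwa [Function.update_self]
  · rw [Function.update_of_ne hqp]
    exact hα q hq

omit [Fintype V] [DecidableRel G.Adj] in
lemma exists_boundary_edge_between (hGconn : G.Connected) (hPsurj : Function.Surjective P)
    (hOorient : ∀ i j, G.Adj i j → P i ≠ P j → ((i, j) ∈ O ↔ (j, i) ∉ O)) {T : Set (Fin ν)}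
    {k l : Fin ν} (hk : k ∈ T) (hl : l ∉ T) :
    ∃ p ∈ O, ∃ k' l', (k' = P p.1 ∧ l' = P p.2 ∨ k' = P p.2 ∧ l' = P p.1) ∧ k' ∈ T ∧ l' ∉ T := by
  obtain ⟨x, rfl⟩ := hPsurj k
  obtain ⟨y, rfl⟩ := hPsurj l
  obtain ⟨d, -, hx, hy⟩ := (hGconn x y).some.exists_boundary_dart (P ⁻¹' T) hk hl
  by_cases h : (d.fst, d.snd) ∈ O
  · exact ⟨_, h, _, _, Or.inl ⟨rfl, rfl⟩, hx, hy⟩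
  · have hne : P d.fst ≠ P d.snd := fun h => hy (show P d.snd ∈ T from h ▸ hx)
    have h' : (d.snd, d.fst) ∈ O := not_not.mp fun h' => h ((hOorient _ _ d.adj hne).mpr h')
    exact ⟨_, h', _, _, Or.inr ⟨rfl, rfl⟩, hx, hy⟩

lemma partitionEnergy_le_lam1Block_of_isLocalMinOn (hGconn : G.Connected)
    (hw : ∀ i j, w i j = w j i) (hwpos : ∀ i j, G.Adj i j → 0 < w i j)
    (hPsurj : Function.Surjective P) (hPconn : ∀ k : Fin ν, (G.induce {v | P v = k}).Connected)
    (hO : ∀ p ∈ O, G.Adj p.1 p.2 ∧ P p.1 ≠ P p.2)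
    (hOorient : ∀ i j, G.Adj i j → P i ≠ P j → ((i, j) ∈ O ↔ (j, i) ∉ O))
    {α : V × V → ℝ} (hα : ∀ p ∈ O, 0 < α p)
    (hmin : IsLocalMinOn (PartitionEnergy G w P O) {α | ∀ p ∈ O, 0 < α p} α) (l : Fin ν) :
    PartitionEnergy G w P O α ≤ lam1Block (paramMatrix G w P O α) P l := by
  set S : Set (V × V → ℝ) := {α | ∀ p ∈ O, 0 < α p}
  set lam := fun α k => lam1Block (paramMatrix G w P O α) P k
  suffices ∀ n α, #{m | lam α m = PartitionEnergy G w P O α} = n → α ∈ S →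
      IsLocalMinOn (PartitionEnergy G w P O) S α → ∀ l, PartitionEnergy G w P O α ≤ lam α l from
    this _ α rfl hα hmin l
  intro n
  induction n using Nat.strong_induction_on with
  | _ n ih =>
  intro α hn hα hmin l
  by_contra! hl
  have : Nonempty (Fin ν) := ⟨l⟩
  obtain ⟨k₀, hk₀⟩ := Finite.exists_max (lam α)
  have hk₀max : lam α k₀ = PartitionEnergy G w P O α :=
    le_antisymm (le_ciSup (Finite.bddAbove_range _) k₀) (ciSup_le hk₀)
  obtain ⟨p, hp, k, l', hkl, hk, hl'⟩ := exists_boundary_edge_between hGconn hPsurj hOorient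
    (T := {m | lam α m = PartitionEnergy G w P O α}) hk₀max hl.ne
  have hl'lt : lam α l' < PartitionEnergy G w P O α :=
    lt_of_le_of_ne (le_ciSup (Finite.bddAbove_range _) _) hl'
  obtain ⟨U, hUo, hαU, hUmin⟩ := mem_nhdsWithin.mp hmin
  obtain ⟨α', hα'U, hα', hk', hl'', hrest⟩ :=
    exists_near_lam1Block_lt hw hwpos hO hα hp hkl (hPconn k) hl'lt (hUo.mem_nhds hαU)
  obtain ⟨heq, hlt⟩ := iSup_eq_and_card_argmax_lt hk hk' hl'' hrest (hUmin ⟨hα'U, hα'⟩)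
  have hmin' : IsLocalMinOn (PartitionEnergy G w P O) S α' :=
    mem_nhdsWithin.mpr ⟨U, hUo, hα'U, fun β hβ => heq.trans_le (hUmin hβ)⟩
  exact ((ih _ (hn ▸ hlt) α' rfl hα' hmin' l').trans_lt hl'').ne heq

end PartitionMatrices

theorem stmt9_general [Fintype V] [DecidableEq V] (G : SimpleGraph V) [DecidableRel G.Adj]
    (hGconn : G.Connected) (w : V → V → ℝ)
    (hwsymm : ∀ i j, w i j = w j i) (hwpos : ∀ i j, G.Adj i j → 0 < w i j)
    {ν : ℕ} (P : V → Fin ν) (hPsurj : Function.Surjective P)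
    (hPconn : ∀ k : Fin ν, (G.induce {v | P v = k}).Connected)
    (O : Finset (V × V))
    (hO : ∀ p ∈ O, G.Adj p.1 p.2 ∧ P p.1 ≠ P p.2)
    (hOorient : ∀ i j, G.Adj i j → P i ≠ P j → ((i, j) ∈ O ↔ (j, i) ∉ O))
    (αs : V × V → ℝ) (hpos : ∀ p ∈ O, 0 < αs p)
    (hmin : IsLocalMinOn (fun α => PartitionEnergy G w P O α)
      {α : V × V → ℝ | ∀ p ∈ O, 0 < α p} αs) :
    IsEquipartition G w P O αs := by
  have hmax : ∀ k, lam1Block (paramMatrix G w P O αs) P k = PartitionEnergy G w P O αs :=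
    fun k => le_antisymm (le_ciSup (Finite.bddAbove_range _) k)
      (partitionEnergy_le_lam1Block_of_isLocalMinOn hGconn hwsymm hwpos hPsurj hPconn hO hOorient
        hpos hmin k)
  intro k l
  rw [hmax k, hmax l]

/-- A local minimum (over parameter vectors with positive entries on the
oriented boundary edges) of the partition energy `Λ(P, ·)` is an equipartition. -/
theorem stmt9 [Fintype V] [DecidableEq V] (G : SimpleGraph V) [DecidableRel G.Adj]
    (hGconn : G.Connected) (w : V → V → ℝ)
    (hwsymm : ∀ i j, w i j = w j i) (hwpos : ∀ i j, G.Adj i j → 0 < w i j)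
    (hw0 : ∀ i j, ¬ G.Adj i j → w i j = 0)
    {ν : ℕ} (hν : 2 ≤ ν) (P : V → Fin ν) (hPsurj : Function.Surjective P)
    (hPconn : ∀ k : Fin ν, (G.induce {v | P v = k}).Connected)
    (O : Finset (V × V))
    (hO : ∀ p ∈ O, G.Adj p.1 p.2 ∧ P p.1 ≠ P p.2)
    (hOorient : ∀ i j, G.Adj i j → P i ≠ P j → ((i, j) ∈ O ↔ (j, i) ∉ O))
    (αs : V × V → ℝ) (hpos : ∀ p ∈ O, 0 < αs p)
    (hmin : IsLocalMinOn (fun α => PartitionEnergy G w P O α)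
      {α : V × V → ℝ | ∀ p ∈ O, 0 < α p} αs) :
    IsEquipartition G w P O αs :=
  stmt9_general G hGconn w hwsymm hwpos P hPsurj hPconn O hO hOorient αs hpos hmin

end
end

section
/- Let K be a finite nonempty set and B a finite set equipped with maps s, t : B → K with s(b) ≠ t(b) for all b ∈ B, such that the multigraph on vertex set K with an edge from s(b) to t(b) for each b ∈ B is connected. Let a, c : B → ℝ be strictly positive, and define the linear map N : ℝ^B → ℝ^K by (Nx)_k = Σ_{b : s(b)=k} a_b x_b − Σ_{b : t(b)=k} c_b x_b. Then: (1) the space of vectors u ∈ ℝ^K satisfying a_b u_{s(b)} = c_b u_{t(b)} for all b ∈ B is at most one-dimensional, and every nonzero such u has all entries of the same strict sign; (2) consequently ℝ^K = span{(1,1,…,1)} + range(N). -/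
open Finset Matrix

/-!
A balanced vector `u` (`a b * u (s b) = c b * u (t b)` for every `b`) has the same sign at the two
endpoints of every edge, because `a b` and `c b` are positive; by connectivity its sign is
constant. So it is either identically zero or of one strict sign, and a balanced vector vanishing
at one point vanishes everywhere, which makes the balanced space at most one-dimensional.

The balanced vectors are exactly the left kernel of the matrix of `N`, i.e. the vectors orthogonal
to `range N` for the dot product. A vector orthogonal also to `(1, …, 1)` has entries summing to
zero, so it cannot have one strict sign and must vanish; hence `span {1} ⊔ range N` is everything.
-/

theorem SimpleGraph.Preconnected.eq_of_forall_adj {V α : Type*} {G : SimpleGraph V}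
    (hG : G.Preconnected) {f : V → α} (hf : ∀ v w, G.Adj v w → f v = f w) (v w : V) :
    f v = f w := by
  obtain ⟨p⟩ := hG v w
  induction p with
  | nil => rfl
  | cons hadj _ ih => exact (hf _ _ hadj).trans ih

theorem Submodule.eq_top_of_forall_dotProduct_eq_zero {𝕜 n : Type*} [Field 𝕜] [Fintype n]
    [DecidableEq n] {W : Submodule 𝕜 (n → 𝕜)} (hW : ∀ u, (∀ w ∈ W, u ⬝ᵥ w = 0) → u = 0) :
    W = ⊤ := by
  by_contra hne
  obtain ⟨φ, hφ, hle⟩ := W.exists_le_ker_of_lt_top (lt_top_iff_ne_top.2 hne)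
  obtain ⟨u, rfl⟩ := (dotProductEquiv 𝕜 n).surjective φ
  exact hφ (by rw [hW u fun w hw => hle hw, map_zero])

/-- The partition multigraph as a simple graph: loops and multiple edges are forgotten. -/
def endpointGraph {K B : Type*} (s t : B → K) : SimpleGraph K :=
  SimpleGraph.fromRel fun k l => ∃ b, s b = k ∧ t b = l

section BoundaryMatrix

variable {K B R : Type*} [CommRing R] [DecidableEq K] (s t : B → K) (a c : B → R)

def boundaryMatrix : Matrix K B R :=
  Matrix.of fun k b => (if s b = k then a b else 0) - if t b = k then c b else 0

theorem boundaryMatrix_mulVec [Fintype B] (x : B → R) (k : K) :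
    (boundaryMatrix s t a c *ᵥ x) k =
      (∑ b, if s b = k then a b * x b else 0) - ∑ b, if t b = k then c b * x b else 0 := by
  simp only [Matrix.mulVec, dotProduct, boundaryMatrix, Matrix.of_apply, sub_mul, ite_mul,
    zero_mul, sum_sub_distrib]

theorem vecMul_boundaryMatrix [Fintype K] (u : K → R) (b : B) :
    (u ᵥ* boundaryMatrix s t a c) b = a b * u (s b) - c b * u (t b) := by
  simp only [Matrix.vecMul, dotProduct, boundaryMatrix, Matrix.of_apply, mul_sub, mul_ite,
    mul_zero, sum_sub_distrib, sum_ite_eq, mem_univ, if_true]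
  ring

theorem vecMul_boundaryMatrix_eq_zero_iff [Fintype K] {u : K → R} :
    u ᵥ* boundaryMatrix s t a c = 0 ↔ ∀ b, a b * u (s b) = c b * u (t b) := by
  simp only [funext_iff, vecMul_boundaryMatrix, Pi.zero_apply, sub_eq_zero]

end BoundaryMatrix

section Balanced

variable {K B 𝕜 : Type*} [CommRing 𝕜] [LinearOrder 𝕜] [IsStrictOrderedRing 𝕜]
  {s t : B → K} {a c : B → 𝕜}

theorem sign_apply_eq_of_balanced (ha : ∀ b, 0 < a b) (hc : ∀ b, 0 < c b)
    (hconn : (endpointGraph s t).Preconnected) {u : K → 𝕜}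
    (hu : ∀ b, a b * u (s b) = c b * u (t b)) (k l : K) :
    SignType.sign (u k) = SignType.sign (u l) := by
  have hedge : ∀ b, SignType.sign (u (s b)) = SignType.sign (u (t b)) := fun b => by
    simpa only [sign_mul, sign_pos (ha b), sign_pos (hc b), one_mul] using
      congrArg SignType.sign (hu b)
  refine hconn.eq_of_forall_adj (f := fun k => SignType.sign (u k)) (fun k l hkl => ?_) k l
  obtain ⟨-, ⟨b, rfl, rfl⟩ | ⟨b, rfl, rfl⟩⟩ := hkl
  · exact hedge b
  · exact (hedge b).symm

theorem eq_zero_of_balanced_of_apply_eq_zero (ha : ∀ b, 0 < a b) (hc : ∀ b, 0 < c b)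
    (hconn : (endpointGraph s t).Preconnected) {u : K → 𝕜}
    (hu : ∀ b, a b * u (s b) = c b * u (t b)) {k₀ : K} (hk₀ : u k₀ = 0) : u = 0 :=
  funext fun k => sign_eq_zero_iff.1 <| by
    rw [sign_apply_eq_of_balanced ha hc hconn hu k k₀, hk₀, sign_zero]

theorem forall_pos_or_forall_neg_of_balanced (ha : ∀ b, 0 < a b) (hc : ∀ b, 0 < c b)
    (hconn : (endpointGraph s t).Preconnected) {u : K → 𝕜}
    (hu : ∀ b, a b * u (s b) = c b * u (t b)) (hne : u ≠ 0) :
    (∀ k, 0 < u k) ∨ ∀ k, u k < 0 := by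
  obtain ⟨k₀, hk₀⟩ := Function.ne_iff.1 hne
  have hsign k : SignType.sign (u k) = SignType.sign (u k₀) :=
    sign_apply_eq_of_balanced ha hc hconn hu k k₀
  rcases hk₀.lt_or_gt with hneg | hpos
  · exact .inr fun k => sign_eq_neg_one_iff.1 <| (hsign k).trans (sign_eq_neg_one_iff.2 hneg)
  · exact .inl fun k => sign_eq_one_iff.1 <| (hsign k).trans (sign_eq_one_iff.2 hpos)

theorem exists_smul_add_smul_eq_zero_of_balanced (ha : ∀ b, 0 < a b) (hc : ∀ b, 0 < c b)
    (hconn : (endpointGraph s t).Preconnected) {u v : K → 𝕜}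
    (hu : ∀ b, a b * u (s b) = c b * u (t b)) (hv : ∀ b, a b * v (s b) = c b * v (t b)) :
    ∃ x y : 𝕜, (x ≠ 0 ∨ y ≠ 0) ∧ x • u + y • v = 0 := by
  by_cases hu0 : u = 0
  · exact ⟨1, 0, .inl one_ne_zero, by simp [hu0]⟩
  obtain ⟨k₀, hk₀⟩ := Function.ne_iff.1 hu0
  refine ⟨-v k₀, u k₀, .inr hk₀, eq_zero_of_balanced_of_apply_eq_zero ha hc hconn
    (k₀ := k₀) (fun b => ?_) ?_⟩
  · simp only [Pi.add_apply, Pi.smul_apply, smul_eq_mul]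
    linear_combination u k₀ * hv b - v k₀ * hu b
  · simp only [Pi.add_apply, Pi.smul_apply, smul_eq_mul]
    ring

end Balanced

theorem span_one_sup_range_boundaryMatrix_eq_top {K B 𝕜 : Type*} [Field 𝕜] [LinearOrder 𝕜]
    [IsStrictOrderedRing 𝕜] [Fintype K] [DecidableEq K] [Fintype B] {s t : B → K} {a c : B → 𝕜}
    (ha : ∀ b, 0 < a b) (hc : ∀ b, 0 < c b) (hconn : (endpointGraph s t).Preconnected) :
    Submodule.span 𝕜 {1} ⊔ LinearMap.range (boundaryMatrix s t a c).mulVecLin = ⊤ := by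
  refine Submodule.eq_top_of_forall_dotProduct_eq_zero fun u hu => ?_
  have hsum : ∑ k, u k = 0 := by
    simpa [dotProduct] using hu 1 (Submodule.mem_sup_left (Submodule.mem_span_singleton_self 1))
  -- test against `M *ᵥ (u ᵥ* M)`, whose dot product with `u` is the square norm of `u ᵥ* M`
  have hker : u ᵥ* boundaryMatrix s t a c = 0 := dotProduct_self_eq_zero.1 <| by
    rw [← Matrix.dotProduct_mulVec]
    exact hu _ (Submodule.mem_sup_right ⟨_, rfl⟩)
  have hbal := (vecMul_boundaryMatrix_eq_zero_iff s t a c).1 hker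
  by_contra hne
  obtain ⟨k₀, -⟩ := Function.ne_iff.1 hne
  rcases forall_pos_or_forall_neg_of_balanced ha hc hconn hbal hne with hpos | hneg
  · exact (sum_pos (fun k _ => hpos k) ⟨k₀, mem_univ _⟩).ne' hsum
  · exact (sum_neg (fun k _ => hneg k) ⟨k₀, mem_univ _⟩).ne hsum

theorem stmt10_general {K B : Type*} [Fintype K] [DecidableEq K] [Fintype B]
    (s t : B → K)
    (hconn : (SimpleGraph.fromRel fun k l => ∃ b, s b = k ∧ t b = l).Connected)
    (a c : B → ℝ) (ha : ∀ b, 0 < a b) (hc : ∀ b, 0 < c b) :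
    (∀ u v : K → ℝ,
        (∀ b, a b * u (s b) = c b * u (t b)) →
        (∀ b, a b * v (s b) = c b * v (t b)) →
        ∃ x y : ℝ, (x ≠ 0 ∨ y ≠ 0) ∧ x • u + y • v = 0) ∧
    (∀ u : K → ℝ, (∀ b, a b * u (s b) = c b * u (t b)) → u ≠ 0 →
        (∀ k, 0 < u k) ∨ (∀ k, u k < 0)) ∧
    (∀ y : K → ℝ, ∃ (r : ℝ) (x : B → ℝ),
        y = (fun _ => r) + fun k =>
          (∑ b, if s b = k then a b * x b else 0) - ∑ b, if t b = k then c b * x b else 0) := by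
  have hpre : (endpointGraph s t).Preconnected := hconn.preconnected
  refine ⟨fun u v hu hv => exists_smul_add_smul_eq_zero_of_balanced ha hc hpre hu hv,
    fun u hu hne => forall_pos_or_forall_neg_of_balanced ha hc hpre hu hne, fun y => ?_⟩
  obtain ⟨p, hp, q, ⟨x, rfl⟩, rfl⟩ :=
    Submodule.mem_sup.1 ((span_one_sup_range_boundaryMatrix_eq_top ha hc hpre).ge (Submodule.mem_top (x := y)))
  obtain ⟨r, rfl⟩ := Submodule.mem_span_singleton.1 hp
  exact ⟨r, x, funext fun k => by simp [boundaryMatrix_mulVec]⟩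

/-- linear-algebra core of the transversality lemma. Let `K` be a finite
nonempty set, `B` a finite set of "boundary edges" with endpoint maps `s t : B → K`,
`s b ≠ t b`, such that the associated multigraph on `K` is connected. Let `a c : B → ℝ` be
strictly positive and define `N : ℝ^B → ℝ^K` by
`(Nx)_k = Σ_{s b = k} a_b x_b − Σ_{t b = k} c_b x_b`. Then (1) the space of `u ∈ ℝ^K` with
`a_b u_{s b} = c_b u_{t b}` for all `b` is at most one-dimensional and every nonzero such
`u` has all entries of the same strict sign, and (2) `ℝ^K = span{(1,…,1)} + range N`. -/
theorem stmt10 {K B : Type*} [Fintype K] [DecidableEq K] [Nonempty K] [Fintype B]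
    (s t : B → K) (hst : ∀ b, s b ≠ t b)
    (hconn : (SimpleGraph.fromRel fun k l => ∃ b, s b = k ∧ t b = l).Connected)
    (a c : B → ℝ) (ha : ∀ b, 0 < a b) (hc : ∀ b, 0 < c b) :
    (∀ u v : K → ℝ,
        (∀ b, a b * u (s b) = c b * u (t b)) →
        (∀ b, a b * v (s b) = c b * v (t b)) →
        ∃ x y : ℝ, (x ≠ 0 ∨ y ≠ 0) ∧ x • u + y • v = 0) ∧
    (∀ u : K → ℝ, (∀ b, a b * u (s b) = c b * u (t b)) → u ≠ 0 →
        (∀ k, 0 < u k) ∨ (∀ k, u k < 0)) ∧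
    (∀ y : K → ℝ, ∃ (r : ℝ) (x : B → ℝ),
        y = (fun _ => r) + fun k =>
          (∑ b, if s b = k then a b * x b else 0) - ∑ b, if t b = k then c b * x b else 0) :=
  stmt10_general s t hconn a c ha hc
end

section
/- Let Γ ⊆ E and let ψ be an eigenvector of L^Γ with ψ_i ≠ 0 for all i ∈ V, and let N = {(i,j) ∈ E : ψ_i σ^Γ_ij ψ_j < 0} be its nodal set with respect to σ^Γ. Then N Δ Γ = {(i,j) ∈ E : ψ_i ψ_j < 0}, this set is a cut of G, and consequently σ^N is switching equivalent to σ^Γ. -/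
open Matrix Finset

noncomputable section

variable {V : Type*}

open Classical in
/-- The signature `σ^Γ` associated to a set of edges `Γ`: `-1` on `Γ`, `+1` elsewhere. -/
def sgnOfEdgeSet (Γ : Set (Sym2 V)) (i j : V) : ℝ :=
  if s(i, j) ∈ Γ then -1 else 1

/-- `C` is a cut of `G`: the set of edges with exactly one endpoint in some `S ⊆ V`. -/
def IsCut (G : SimpleGraph V) (C : Set (Sym2 V)) : Prop :=
  ∃ S : Set V, C = {e | ∃ i j, e = s(i, j) ∧ G.Adj i j ∧ i ∈ S ∧ j ∉ S}

/-- Two signatures on `G` are switching equivalent. -/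
def SwitchingEquiv (G : SimpleGraph V) (σ σ' : V → V → ℝ) : Prop :=
  ∃ τ : V → ℝ, (∀ v, τ v = 1 ∨ τ v = -1) ∧
    ∀ i j, G.Adj i j → σ' i j = τ i * σ i j * τ j

/-!
On an edge `ij`, `ψ_i σ^Γ_ij ψ_j < 0` holds exactly when either `ij ∉ Γ` and `ψ` changes sign
across `ij`, or `ij ∈ Γ` and it does not; hence `N Δ Γ` is the set of sign changes of `ψ`, the
cut with shore `{ψ > 0}`. A cut `C` with shore `S` has `σ^C_ij = τ_i τ_j` for `τ = -1` on `S`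
and `+1` off it, and `σ^N = σ^(N Δ Γ) σ^Γ`.
-/

def signChangeEdges (G : SimpleGraph V) (ψ : V → ℝ) : Set (Sym2 V) :=
  {e | ∃ i j, e = s(i, j) ∧ G.Adj i j ∧ ψ i * ψ j < 0}

lemma mk_mem_setOf_exists_mk_iff (r : V → V → Prop) (i j : V) :
    s(i, j) ∈ {e | ∃ a b, e = s(a, b) ∧ r a b} ↔ r i j ∨ r j i := by
  constructor
  · rintro ⟨a, b, hab, hr⟩
    rcases Sym2.eq_iff.mp hab with ⟨rfl, rfl⟩ | ⟨rfl, rfl⟩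
    exacts [Or.inl hr, Or.inr hr]
  · rintro (hr | hr)
    exacts [⟨i, j, rfl, hr⟩, ⟨j, i, Sym2.eq_swap, hr⟩]

lemma mk_mem_nodalEdges_iff {G : SimpleGraph V} {σ : V → V → ℝ} (hσ : ∀ i j, σ i j = σ j i)
    (u : V → ℝ) (i j : V) :
    s(i, j) ∈ nodalEdges G σ u ↔ G.Adj i j ∧ u i * σ i j * u j < 0 := by
  refine (mk_mem_setOf_exists_mk_iff _ i j).trans (or_iff_left_of_imp ?_)
  rintro ⟨hadj, hneg⟩
  exact ⟨hadj.symm, by convert hneg using 1; rw [hσ]; ring⟩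

lemma mk_mem_signChangeEdges_iff (G : SimpleGraph V) (ψ : V → ℝ) (i j : V) :
    s(i, j) ∈ signChangeEdges G ψ ↔ G.Adj i j ∧ ψ i * ψ j < 0 := by
  refine (mk_mem_setOf_exists_mk_iff _ i j).trans (or_iff_left_of_imp ?_)
  rintro ⟨hadj, hneg⟩
  exact ⟨hadj.symm, by rwa [mul_comm]⟩

lemma sgnOfEdgeSet_comm (Γ : Set (Sym2 V)) (i j : V) :
    sgnOfEdgeSet Γ i j = sgnOfEdgeSet Γ j i := by
  rw [sgnOfEdgeSet, sgnOfEdgeSet, Sym2.eq_swap]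

lemma sgnOfEdgeSet_symmDiff (A B : Set (Sym2 V)) (i j : V) :
    sgnOfEdgeSet (symmDiff A B) i j = sgnOfEdgeSet A i j * sgnOfEdgeSet B i j := by
  by_cases hA : s(i, j) ∈ A <;> by_cases hB : s(i, j) ∈ B <;>
    simp [sgnOfEdgeSet, Set.mem_symmDiff, hA, hB]

lemma symmDiff_nodalEdges_sgnOfEdgeSet {G : SimpleGraph V} {Γ : Set (Sym2 V)}
    (hΓ : Γ ⊆ G.edgeSet) {ψ : V → ℝ} (hψ : ∀ v, ψ v ≠ 0) :
    symmDiff (nodalEdges G (sgnOfEdgeSet Γ) ψ) Γ = signChangeEdges G ψ := by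
  ext e
  induction e using Sym2.ind with
  | _ i j =>
    rw [Set.mem_symmDiff, mk_mem_nodalEdges_iff (sgnOfEdgeSet_comm Γ),
      mk_mem_signChangeEdges_iff]
    have hψψ : ψ i * ψ j ≠ 0 := mul_ne_zero (hψ i) (hψ j)
    by_cases hg : s(i, j) ∈ Γ
    · have hadj : G.Adj i j := hΓ hg
      simp only [sgnOfEdgeSet, hg, if_true, not_true_eq_false, and_false, true_and, false_or,
        hadj, mul_neg_one, neg_mul, neg_lt_zero, not_lt]
      exact hψψ.le_iff_lt
    · simp [sgnOfEdgeSet, hg]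

lemma isCut_signChangeEdges (G : SimpleGraph V) {ψ : V → ℝ} (hψ : ∀ v, ψ v ≠ 0) :
    IsCut G (signChangeEdges G ψ) := by
  refine ⟨{v | 0 < ψ v}, ?_⟩
  ext e
  induction e using Sym2.ind with
  | _ i j =>
    rw [mk_mem_signChangeEdges_iff, mk_mem_setOf_exists_mk_iff]
    have hneg : ∀ v, ¬ 0 < ψ v ↔ ψ v < 0 := fun v => not_lt.trans (hψ v).le_iff_lt
    simp only [Set.mem_ofPred_eq, hneg, G.adj_comm j i, mul_neg_iff, ← and_or_left,
      and_comm (a := 0 < ψ j)]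

lemma IsCut.sgnOfEdgeSet_eq_mul {G : SimpleGraph V} {C : Set (Sym2 V)} (hC : IsCut G C) :
    ∃ τ : V → ℝ, (∀ v, τ v = 1 ∨ τ v = -1) ∧
      ∀ i j, G.Adj i j → sgnOfEdgeSet C i j = τ i * τ j := by
  classical
  obtain ⟨S, rfl⟩ := hC
  refine ⟨fun v => if v ∈ S then -1 else 1, fun v => by dsimp only; split_ifs <;> simp, ?_⟩
  intro i j hadj
  have hmem := mk_mem_setOf_exists_mk_iff (fun a b => G.Adj a b ∧ a ∈ S ∧ b ∉ S) i j
  simp only [sgnOfEdgeSet, hmem, hadj, hadj.symm, true_and]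
  by_cases hi : i ∈ S <;> by_cases hj : j ∈ S <;> simp [hi, hj]

lemma switchingEquiv_sgnOfEdgeSet_symmDiff {G : SimpleGraph V} {C : Set (Sym2 V)}
    (hC : IsCut G C) (Γ : Set (Sym2 V)) :
    SwitchingEquiv G (sgnOfEdgeSet Γ) (sgnOfEdgeSet (symmDiff C Γ)) := by
  obtain ⟨τ, hτ, hCτ⟩ := hC.sgnOfEdgeSet_eq_mul
  refine ⟨τ, hτ, fun i j hadj => ?_⟩
  rw [sgnOfEdgeSet_symmDiff, hCτ i j hadj]
  ring

theorem stmt14_general (G : SimpleGraph V)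
    (Γ : Set (Sym2 V)) (hΓ : Γ ⊆ G.edgeSet)
    (ψ : V → ℝ)
    (hψnz : ∀ v, ψ v ≠ 0) :
    symmDiff (nodalEdges G (sgnOfEdgeSet Γ) ψ) Γ
        = {e | ∃ i j, e = s(i, j) ∧ G.Adj i j ∧ ψ i * ψ j < 0} ∧
    IsCut G (symmDiff (nodalEdges G (sgnOfEdgeSet Γ) ψ) Γ) ∧
    SwitchingEquiv G (sgnOfEdgeSet Γ) (sgnOfEdgeSet (nodalEdges G (sgnOfEdgeSet Γ) ψ)) := by
  have hsymm := symmDiff_nodalEdges_sgnOfEdgeSet hΓ hψnz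
  have hcut : IsCut G (symmDiff (nodalEdges G (sgnOfEdgeSet Γ) ψ) Γ) :=
    hsymm ▸ isCut_signChangeEdges G hψnz
  refine ⟨hsymm, hcut, ?_⟩
  simpa only [symmDiff_symmDiff_cancel_right] using switchingEquiv_sgnOfEdgeSet_symmDiff hcut Γ

/-- If `ψ` is a nowhere-zero eigenvector of `L^Γ` with nodal set `N`
(w.r.t. `σ^Γ`), then `N Δ Γ` is the set of edges across which `ψ` changes sign, this set is
a cut of `G`, and consequently `σ^N` is switching equivalent to `σ^Γ`. -/
theorem stmt14 [Fintype V] [DecidableEq V] (G : SimpleGraph V) [DecidableRel G.Adj]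
    (hGconn : G.Connected) (w : V → V → ℝ)
    (hwsymm : ∀ i j, w i j = w j i) (hwpos : ∀ i j, G.Adj i j → 0 < w i j)
    (hw0 : ∀ i j, ¬ G.Adj i j → w i j = 0)
    (Γ : Set (Sym2 V)) (hΓ : Γ ⊆ G.edgeSet)
    (ψ : V → ℝ) (lam : ℝ)
    (heig : (signedLaplacian G w (sgnOfEdgeSet Γ)).mulVec ψ = lam • ψ)
    (hψne : ψ ≠ 0) (hψnz : ∀ v, ψ v ≠ 0) :
    symmDiff (nodalEdges G (sgnOfEdgeSet Γ) ψ) Γ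
        = {e | ∃ i j, e = s(i, j) ∧ G.Adj i j ∧ ψ i * ψ j < 0} ∧
    IsCut G (symmDiff (nodalEdges G (sgnOfEdgeSet Γ) ψ) Γ) ∧
    SwitchingEquiv G (sgnOfEdgeSet Γ) (sgnOfEdgeSet (nodalEdges G (sgnOfEdgeSet Γ) ψ)) :=
  stmt14_general G Γ hΓ ψ hψnz

end
end
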